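/- arXiv:2207.11809 — 8 statements merged into one kernel-verified Lean document; each statement's English description precedes it below -/
import Mathlib

section
/- Let M be a positive integer, A, B finite subsets of ℤ/Mℤ with A ⊕ B = ℤ/Mℤ (every element of ℤ/Mℤ is uniquely a + b with a ∈ A, b ∈ B), and let ψ : ℤ/Mℤ → ℤ/Mℤ be a divisor isometry. Then ψ(A) ⊕ B = ℤ/Mℤ is also a tiling. -/
/-- `A ⊕ B = ℤ_M`: every element has a unique representation `a + b`, `a ∈ A`, `b ∈ B`. -/
def IsTiling {M : ℕ} (A B : Finset (ZMod M)) : Prop :=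
  ∀ z : ZMod M, ∃! ab : ZMod M × ZMod M, ab.1 ∈ A ∧ ab.2 ∈ B ∧ ab.1 + ab.2 = z

/-!
A tiling `A ⊕ B = ℤ_M` is characterised (Sands) by `|A| |B| = M` and the disjointness, away from
`M`, of the sets of values of `gcd(a - a', M)` and of `gcd(b - b', M)`; a divisor isometry preserves
both. The nontrivial half of the criterion rests on Tijdeman's dilation theorem: if `A ⊕ B = G`
and `t` is prime to `|B|`, then `A ⊕ t B = G`. For a prime `p ∤ |B|` this is read off in
`𝔽_p[G]`: Frobenius sends the indicator of `s B` to that of `p s B`, so `1_A 1_{sB} = 1_G`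
gives `1_A 1_{psB} = 1_G 1_{sB}^(p-1) = |B|^(p-1) 1_G = 1_G`.
If now `gcd(a - a', M) = gcd(b - b', M)`, then `a - a' = u (b - b')` for a unit `u`, and
`a + u b' = a' + u b` contradicts the tiling `A ⊕ u B`.
-/

open Finset AddMonoidAlgebra

namespace ZMod

theorem gcd_val_unit_mul {N : ℕ} (u : (ZMod N)ˣ) (x : ZMod N) :
    ((u : ZMod N) * x).val.gcd N = x.val.gcd N := by
  rw [val_mul, ← Nat.gcd_rec, Nat.gcd_comm N, (val_coe_unit_coprime u).gcd_mul_left_cancel]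

theorem gcd_val_natCast_of_dvd {N d : ℕ} (hd : d ∣ N) : (d : ZMod N).val.gcd N = d := by
  rw [val_natCast, ← Nat.gcd_rec, Nat.gcd_comm, Nat.gcd_eq_left hd]

theorem exists_unit_mul_of_gcd_val_eq {N : ℕ} {x y : ZMod N}
    (h : x.val.gcd N = y.val.gcd N) : ∃ u : (ZMod N)ˣ, x = u * y := by
  obtain ⟨d, hd, _, ⟨u, rfl⟩, rfl⟩ := eq_unit_mul_divisor x
  obtain ⟨e, he, _, ⟨v, rfl⟩, rfl⟩ := eq_unit_mul_divisor y
  rw [gcd_val_unit_mul, gcd_val_unit_mul, gcd_val_natCast_of_dvd hd,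
    gcd_val_natCast_of_dvd he] at h
  subst h
  exact ⟨u * v⁻¹, by simp [mul_assoc]⟩

theorem gcd_val_eq_self_iff {N : ℕ} [NeZero N] {x : ZMod N} : x.val.gcd N = N ↔ x = 0 := by
  rw [Nat.gcd_eq_right_iff_dvd, ← natCast_eq_zero_iff, natCast_zmod_val]

end ZMod

section DilatedTiling

variable {G : Type*} [AddCommGroup G]

/-- `A ⊕ t • B = G`, with `t • B` counted with multiplicity. -/
def IsDilatedTiling (t : ℕ) (A B : Finset G) : Prop :=
  Set.BijOn (fun x : G × G => x.1 + t • x.2) ↑(A ×ˢ B) Set.univ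

variable [Fintype G] {t : ℕ} {A B : Finset G}

theorem IsDilatedTiling.card_mul_card (h : IsDilatedTiling t A B) :
    #A * #B = Fintype.card G := by
  rw [← card_product, ← card_univ]
  exact card_nbij _ (fun _ _ => mem_univ _) h.injOn (by simpa using h.surjOn)

theorem isDilatedTiling_of_surjOn (hcard : #A * #B = Fintype.card G)
    (h : Set.SurjOn (fun x : G × G => x.1 + t • x.2) ↑(A ×ˢ B) Set.univ) :
    IsDilatedTiling t A B := by
  refine ⟨Set.mapsTo_univ _ _, ?_, h⟩
  rw [← coe_univ] at h
  exact injOn_of_surjOn_of_card_le _ (by simp) h (by simp [hcard])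

theorem isDilatedTiling_of_injOn (hcard : #A * #B = Fintype.card G)
    (h : Set.InjOn (fun x : G × G => x.1 + t • x.2) ↑(A ×ˢ B)) :
    IsDilatedTiling t A B := by
  refine ⟨Set.mapsTo_univ _ _, h, ?_⟩
  rw [← coe_univ]
  exact surjOn_of_injOn_of_card_le _ (by simp) h (by simp [hcard])

end DilatedTiling

section GroupAlgebra

variable {k G : Type*} [CommSemiring k]

theorem coeff_sum_univ_single [Fintype G] [DecidableEq G] (z : G) :
    (∑ g, single g (1 : k)).coeff z = 1 := by
  simp [Finsupp.single_apply]

theorem exists_eq_of_coeff_sum_single_ne_zero {ι : Type*} {s : Finset ι} {f : ι → G} {z : G}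
    (h : (∑ x ∈ s, single (f x) (1 : k)).coeff z ≠ 0) : ∃ x ∈ s, f x = z := by
  contrapose! h
  rw [coeff_sum, Finsupp.finsetSum_apply]
  exact sum_eq_zero fun x hx => Finsupp.single_eq_of_ne (h x hx).symm

variable [AddCommGroup G]

theorem sum_single_mul_sum_single_nsmul (A B : Finset G) (t : ℕ) :
    (∑ a ∈ A, single a (1 : k)) * ∑ b ∈ B, single (t • b) 1
      = ∑ x ∈ A ×ˢ B, single (x.1 + t • x.2) 1 := by
  simp [sum_mul_sum, sum_product, single_mul_single]

variable [Fintype G]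

theorem IsDilatedTiling.sum_single_eq {t : ℕ} {A B : Finset G} (h : IsDilatedTiling t A B) :
    ∑ x ∈ A ×ˢ B, single (x.1 + t • x.2) (1 : k) = ∑ z, single z 1 :=
  sum_nbij _ (fun _ _ => mem_univ _) h.injOn (by simpa using h.surjOn) fun _ _ => rfl

theorem sum_univ_single_mul_single (g : G) :
    (∑ z, single z (1 : k)) * single g 1 = ∑ z, single z 1 := by
  simp only [sum_mul, single_mul_single, mul_one]
  exact Fintype.sum_equiv (Equiv.addRight g) _ _ fun _ => rfl

theorem sum_univ_single_mul_sum_single_pow (B : Finset G) (f : G → G) (n : ℕ) :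
    (∑ z, single z (1 : k)) * (∑ b ∈ B, single (f b) 1) ^ n
      = (#B : k) ^ n • ∑ z, single z 1 := by
  induction n with
  | zero => simp
  | succ n ih =>
    rw [pow_succ, ← mul_assoc, ih, smul_mul_assoc, mul_sum]
    simp only [sum_univ_single_mul_single, sum_const, ← Nat.cast_smul_eq_nsmul k, smul_smul,
      pow_succ]

end GroupAlgebra

section Tijdeman

variable {G : Type*} [AddCommGroup G] [Fintype G] {A B : Finset G}

theorem IsDilatedTiling.prime_mul {p s : ℕ} [hp : Fact p.Prime] (h : IsDilatedTiling s A B)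
    (hpB : ¬ p ∣ #B) : IsDilatedTiling (p * s) A B := by
  have : CharP (AddMonoidAlgebra (ZMod p) G) p :=
    charP_of_injective_algebraMap' (ZMod p) p
  set α := ∑ a ∈ A, single a (1 : ZMod p)
  set β := fun n : ℕ => ∑ b ∈ B, single (n • b) (1 : ZMod p)
  set ω := ∑ z : G, single z (1 : ZMod p)
  have hα : α * β s = ω := by rw [sum_single_mul_sum_single_nsmul, h.sum_single_eq]
  have hβ : β s ^ p = β (p * s) := by
    simp [β, sum_pow_char, single_pow, mul_nsmul']
  have hB : (#B : ZMod p) ≠ 0 := by rwa [Ne, ZMod.natCast_eq_zero_iff]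
  have hprod : α * β (p * s) = ω := calc
    α * β (p * s) = α * β s * β s ^ (p - 1) := by
      rw [← hβ, mul_assoc, ← pow_succ', Nat.sub_add_cancel hp.out.one_le]
    _ = ω := by
      rw [hα, sum_univ_single_mul_sum_single_pow, ZMod.pow_card_sub_one_eq_one hB, one_smul]
  classical
  refine isDilatedTiling_of_surjOn h.card_mul_card fun z _ => ?_
  have hz : (α * β (p * s)).coeff z ≠ 0 := by
    rw [hprod, coeff_sum_univ_single]
    exact one_ne_zero
  rw [sum_single_mul_sum_single_nsmul] at hz
  exact exists_eq_of_coeff_sum_single_ne_zero hz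

theorem IsDilatedTiling.of_coprime (h : IsDilatedTiling 1 A B) {t : ℕ} (ht : t.Coprime #B) :
    IsDilatedTiling t A B := by
  induction t using UniqueFactorizationMonoid.induction_on_prime with
  | h₁ =>
    obtain ⟨b, rfl⟩ := card_eq_one.mp (Nat.coprime_zero_left _ |>.mp ht)
    refine isDilatedTiling_of_injOn h.card_mul_card fun x hx y hy hxy => ?_
    simp only [coe_product, coe_singleton, Set.mem_prod, Set.mem_singleton_iff] at hx hy
    simpa [Prod.ext_iff, hx.2, hy.2] using hxy
  | h₂ u hu => rwa [Nat.isUnit_iff.mp hu]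
  | h₃ s p _ hprime ih =>
    have hp : Fact p.Prime := ⟨Nat.prime_iff.mpr hprime⟩
    refine (ih (Nat.Coprime.coprime_mul_left ht)).prime_mul ?_
    exact (Nat.Prime.coprime_iff_not_dvd hp.out).mp (Nat.Coprime.coprime_mul_right ht)

end Tijdeman

theorem isTiling_iff_isDilatedTiling_one {M : ℕ} {A B : Finset (ZMod M)} :
    IsTiling A B ↔ IsDilatedTiling 1 A B := by
  simp only [IsTiling, IsDilatedTiling, one_smul]
  constructor
  · intro h
    refine ⟨Set.mapsTo_univ _ _, fun x hx y hy hxy => ?_, fun z _ => ?_⟩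
    · simp only [coe_product, Set.mem_prod, mem_coe] at hx hy
      exact (h _).unique ⟨hx.1, hx.2, rfl⟩ ⟨hy.1, hy.2, hxy.symm⟩
    · obtain ⟨x, ⟨hxA, hxB, rfl⟩, -⟩ := h z
      exact ⟨x, by simp [hxA, hxB], rfl⟩
  · intro h z
    obtain ⟨x, hx, rfl⟩ := h.surjOn (Set.mem_univ z)
    simp only [coe_product, Set.mem_prod, mem_coe] at hx
    exact ⟨x, ⟨hx.1, hx.2, rfl⟩,
      fun y hy => h.injOn (by simp [hy.1, hy.2.1]) (by simp [hx]) hy.2.2⟩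

theorem IsDilatedTiling.gcd_val_sub_ne {M : ℕ} [NeZero M] {A B : Finset (ZMod M)}
    (h : IsDilatedTiling 1 A B) {a a' b b' : ZMod M} (ha : a ∈ A) (ha' : a' ∈ A) (hb : b ∈ B)
    (hb' : b' ∈ B) (hne : a ≠ a') : (a - a').val.gcd M ≠ (b - b').val.gcd M := by
  intro hgcd
  obtain ⟨u, hu⟩ := ZMod.exists_unit_mul_of_gcd_val_eq hgcd
  have hBM : #B ∣ M := Dvd.intro_left _ (h.card_mul_card.trans (ZMod.card M))
  have hcop : (u : ZMod M).val.Coprime #B := (ZMod.val_coe_unit_coprime u).coprime_dvd_right hBM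
  have hsum : a + (u : ZMod M).val • b' = a' + (u : ZMod M).val • b := by
    simp only [nsmul_eq_mul, ZMod.natCast_zmod_val]
    linear_combination hu
  have := (h.of_coprime hcop).injOn (x₁ := (a, b')) (x₂ := (a', b)) (by simp [ha, hb'])
    (by simp [ha', hb]) hsum
  exact hne (congrArg Prod.fst this)

theorem divisor_isometry_preserves_tiling (M : ℕ) (hM : 0 < M)
    (A B : Finset (ZMod M)) (hT : IsTiling A B)
    (ψ : ZMod M → ZMod M)
    (hψ : ∀ x x' : ZMod M, Nat.gcd (ψ x - ψ x').val M = Nat.gcd (x - x').val M) :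
    IsTiling (A.image ψ) B := by
  have : NeZero M := ⟨hM.ne'⟩
  rw [isTiling_iff_isDilatedTiling_one] at hT ⊢
  have hψinj : Function.Injective ψ := fun x x' hxx' => sub_eq_zero.mp <|
    ZMod.gcd_val_eq_self_iff.mp (by rw [← hψ, hxx', sub_self, ZMod.val_zero, Nat.gcd_zero_left])
  refine isDilatedTiling_of_injOn ?_ ?_
  · rw [card_image_of_injective _ hψinj, hT.card_mul_card]
  rintro ⟨_, b⟩ hx ⟨_, b'⟩ hy hsum
  simp only [coe_product, Set.mem_prod, coe_image, Set.mem_image, mem_coe] at hx hy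
  obtain ⟨⟨a, ha, rfl⟩, hb⟩ := hx
  obtain ⟨⟨a', ha', rfl⟩, hb'⟩ := hy
  simp only [one_smul] at hsum
  have haa' : a = a' := by
    by_contra hne
    refine hT.gcd_val_sub_ne ha ha' hb' hb hne ?_
    rw [← hψ, show ψ a - ψ a' = b' - b by linear_combination hsum]
  subst haa'
  rw [add_left_cancel hsum]
end

section
/- Let M be a positive integer, m a divisor of M, and x, x' ∈ ℤ/Mℤ with gcd(x,M) = gcd(x',M) = m. Then the number of units r of ℤ/Mℤ with r·x = x' equals φ(M)/φ(M/m), where φ is Euler's totient function. -/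
section aux

variable (M m : ℕ) [NeZero M]

private lemma aux_mul_cancel (hm : m ∣ M) (hm0 : m ≠ 0) (a b : ZMod M) :
    (m : ZMod M) * a = (m : ZMod M) * b ↔
      ZMod.castHom (Nat.div_dvd_of_dvd hm) (ZMod (M / m)) a
        = ZMod.castHom (Nat.div_dvd_of_dvd hm) (ZMod (M / m)) b := by
  have key : ∀ y : ZMod M, (m : ZMod M) * y = 0 ↔
      ZMod.castHom (Nat.div_dvd_of_dvd hm) (ZMod (M / m)) y = 0 := by
    intro y
    have h1 : (m : ZMod M) * y = ((m * y.val : ℕ) : ZMod M) := by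
      push_cast [ZMod.natCast_zmod_val]; ring
    have h2 : (ZMod.castHom (Nat.div_dvd_of_dvd hm) (ZMod (M / m))) y
        = ((y.val : ℕ) : ZMod (M / m)) := by
      rw [ZMod.castHom_apply, ← ZMod.natCast_val]
    rw [h1, h2, ZMod.natCast_eq_zero_iff, ZMod.natCast_eq_zero_iff]
    constructor
    · intro h
      have h' : m * (M / m) ∣ m * y.val := by rw [Nat.mul_div_cancel' hm]; exact h
      exact (Nat.mul_dvd_mul_iff_left (Nat.pos_of_ne_zero hm0)).mp h'
    · intro h
      have h' : m * (M / m) ∣ m * y.val := Nat.mul_dvd_mul_left m h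
      rwa [Nat.mul_div_cancel' hm] at h'
  rw [← sub_eq_zero, ← mul_sub, key, map_sub, sub_eq_zero]

private lemma aux_exists_unit (hm : m ∣ M) (x : ZMod M) (hx : Nat.gcd x.val M = m) :
    ∃ u : (ZMod M)ˣ, x = (m : ZMod M) * u := by
  have hM : M ≠ 0 := NeZero.ne M
  have hm0 : m ≠ 0 := by rintro rfl; exact hM (Nat.eq_zero_of_zero_dvd hm)
  haveI : NeZero (M / m) := ⟨(Nat.div_pos (Nat.le_of_dvd (Nat.pos_of_ne_zero hM) hm)
    (Nat.pos_of_ne_zero hm0)).ne'⟩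
  have hmx : m ∣ x.val := hx ▸ Nat.gcd_dvd_left _ _
  have hcop : Nat.Coprime (x.val / m) (M / m) := by
    have := Nat.coprime_div_gcd_div_gcd (m := x.val) (n := M)
      (by rw [hx]; exact Nat.pos_of_ne_zero hm0)
    rwa [hx] at this
  obtain ⟨u, hu⟩ := ZMod.unitsMap_surjective (Nat.div_dvd_of_dvd hm)
    (ZMod.unitOfCoprime _ hcop)
  refine ⟨u, ?_⟩
  have h1 : (ZMod.castHom (Nat.div_dvd_of_dvd hm) (ZMod (M / m))) (u : ZMod M)
      = ((x.val / m : ℕ) : ZMod (M / m)) := by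
    have := congrArg Units.val hu
    rwa [ZMod.unitsMap_def, Units.coe_map, ZMod.coe_unitOfCoprime] at this
  have h2 : (m : ZMod M) * ((x.val / m : ℕ) : ZMod M) = (m : ZMod M) * (u : ZMod M) := by
    rw [aux_mul_cancel M m hm hm0, h1, map_natCast]
  have h3 : x = (m : ZMod M) * ((x.val / m : ℕ) : ZMod M) := by
    conv_lhs => rw [← ZMod.natCast_zmod_val x, ← Nat.mul_div_cancel' hmx]
    push_cast; ring
  rw [h3, h2]

end aux

theorem count_units_dilating (M : ℕ) [NeZero M]
    (m : ℕ) (hm : m ∣ M) (x x' : ZMod M)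
    (hx : Nat.gcd x.val M = m) (hx' : Nat.gcd x'.val M = m) :
    (Finset.univ.filter
      (fun r : ZMod M => Nat.gcd r.val M = 1 ∧ r * x = x')).card
      = Nat.totient M / Nat.totient (M / m) := by
  classical
  have hM : M ≠ 0 := NeZero.ne M
  have hm0 : m ≠ 0 := by rintro rfl; exact hM (Nat.eq_zero_of_zero_dvd hm)
  have hMm : 0 < M / m := Nat.div_pos (Nat.le_of_dvd (Nat.pos_of_ne_zero hM) hm)
    (Nat.pos_of_ne_zero hm0)
  haveI : NeZero (M / m) := ⟨hMm.ne'⟩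
  set hm' : M / m ∣ M := Nat.div_dvd_of_dvd hm with hm'def
  obtain ⟨u, hu⟩ := aux_exists_unit M m hm x hx
  obtain ⟨u', hu'⟩ := aux_exists_unit M m hm x' hx'
  -- Step 1: biject with kernel-defining filter on units
  have step1 : (Finset.univ.filter
      (fun r : ZMod M => Nat.gcd r.val M = 1 ∧ r * x = x')).card
      = (Finset.univ.filter
          (fun w : (ZMod M)ˣ => ZMod.unitsMap hm' w = 1)).card := by
    symm
    apply Finset.card_bij (fun w _ => ((w * u' * u⁻¹ : (ZMod M)ˣ) : ZMod M))
    · intro w hw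
      simp only [Finset.mem_filter, Finset.mem_univ, true_and] at hw ⊢
      constructor
      · have : IsUnit (((w * u' * u⁻¹ : (ZMod M)ˣ) : ZMod M)) := Units.isUnit _
        rwa [← ZMod.natCast_zmod_val ((w * u' * u⁻¹ : (ZMod M)ˣ) : ZMod M),
          ZMod.isUnit_iff_coprime] at this
      · -- (w*u'*u⁻¹) * x = x'
        rw [hu, hu']
        have hcast : ZMod.castHom hm' (ZMod (M / m)) ((w * u' * u⁻¹ : (ZMod M)ˣ) * u : ZMod M)
            = ZMod.castHom hm' (ZMod (M / m)) (u' : ZMod M) := by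
          have hw1 : ZMod.unitsMap hm' (w * u' * u⁻¹ * u) = ZMod.unitsMap hm' u' := by
            simp only [map_mul, map_inv, hw, one_mul]
            group
          have h2 := congrArg Units.val hw1
          simpa only [ZMod.unitsMap_def, Units.coe_map, MonoidHom.coe_coe,
            Units.val_mul] using h2
        have := (aux_mul_cancel M m hm hm0 _ _).mpr hcast
        calc ((w * u' * u⁻¹ : (ZMod M)ˣ) : ZMod M) * ((m : ZMod M) * u)
            = (m : ZMod M) * (((w * u' * u⁻¹ : (ZMod M)ˣ) : ZMod M) * u) := by ring
          _ = (m : ZMod M) * u' := this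
    · intro w1 h1 w2 h2 h
      exact mul_right_cancel (mul_right_cancel (Units.ext h))
    · intro r hr
      simp only [Finset.mem_filter, Finset.mem_univ, true_and] at hr
      obtain ⟨hr1, hr2⟩ := hr
      have hru : IsUnit r := by
        rw [← ZMod.natCast_zmod_val r, ZMod.isUnit_iff_coprime]; exact hr1
      obtain ⟨v, hv⟩ := hru
      refine ⟨v * u * u'⁻¹, ?_, ?_⟩
      · simp only [Finset.mem_filter, Finset.mem_univ, true_and]
        -- unitsMap (v*u*u'⁻¹) = 1
        rw [ZMod.unitsMap_def]
        apply Units.ext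
        rw [Units.coe_map]
        simp only [MonoidHom.coe_coe, Units.val_mul, map_mul, Units.val_one]
        have : (m : ZMod M) * ((v : ZMod M) * u) = (m : ZMod M) * (u' : ZMod M) := by
          rw [hu, hu'] at hr2
          rw [hv]
          calc (m : ZMod M) * (r * (u : ZMod M)) = r * ((m : ZMod M) * u) := by ring
            _ = (m : ZMod M) * u' := hr2
        have hc := (aux_mul_cancel M m hm hm0 _ _).mp this
        rw [map_mul] at hc
        have hinv : (ZMod.castHom hm' (ZMod (M / m))) ((u'⁻¹ : (ZMod M)ˣ) : ZMod M)
            * (ZMod.castHom hm' (ZMod (M / m))) ((u' : (ZMod M)ˣ) : ZMod M) = 1 := by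
          have huu : ((u'⁻¹ : (ZMod M)ˣ) : ZMod M) * ((u' : (ZMod M)ˣ) : ZMod M) = 1 := by
            rw [← Units.val_mul, inv_mul_cancel, Units.val_one]
          rw [← map_mul, huu, map_one]
        calc (ZMod.castHom hm' (ZMod (M/m))) (v : ZMod M)
              * (ZMod.castHom hm' (ZMod (M/m))) (u : ZMod M)
              * (ZMod.castHom hm' (ZMod (M/m))) ((u'⁻¹ : (ZMod M)ˣ) : ZMod M)
            = (ZMod.castHom hm' (ZMod (M/m))) ((u' : (ZMod M)ˣ) : ZMod M)
              * (ZMod.castHom hm' (ZMod (M/m))) ((u'⁻¹ : (ZMod M)ˣ) : ZMod M) := by rw [hc]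
          _ = 1 := by rw [mul_comm]; exact hinv
      · -- (v*u*u'⁻¹) * u' * u⁻¹ = r
        rw [show v * u * u'⁻¹ * u' * u⁻¹ = v by group]
        exact hv
  rw [step1]
  -- Step 2: cardinality of kernel
  have hsurj := ZMod.unitsMap_surjective (m := M) hm'
  have hcard : Nat.card ((ZMod M)ˣ)
      = Nat.card ((ZMod (M / m))ˣ) * Nat.card (ZMod.unitsMap hm').ker := by
    rw [Subgroup.card_eq_card_quotient_mul_card_subgroup (ZMod.unitsMap hm').ker]
    congr 1
    exact Nat.card_congr (QuotientGroup.quotientKerEquivOfSurjective _ hsurj).toEquiv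
  have hfin : (Finset.univ.filter
      (fun w : (ZMod M)ˣ => ZMod.unitsMap hm' w = 1)).card
      = Nat.card (ZMod.unitsMap hm').ker := by
    rw [Nat.card_eq_fintype_card, Fintype.card_subtype]
    apply Finset.card_bij (fun a _ => a) <;> simp [MonoidHom.mem_ker]
  rw [hfin]
  rw [Nat.card_eq_fintype_card, ZMod.card_units_eq_totient, Nat.card_eq_fintype_card,
    ZMod.card_units_eq_totient] at hcard
  rw [hcard, Nat.mul_div_cancel_left _ (Nat.totient_pos.mpr hMm)]
end

section
/- (Box product identity / GLW theorem) Let A ⊕ B = ℤ/Mℤ be a tiling of the cyclic group ℤ/Mℤ by finite sets A, B. For x, y ∈ ℤ/Mℤ and m ∣ M define 𝔸_m[x] = #{ a ∈ A : gcd(x - a, M) = m } and 𝔹_m[y] = #{ b ∈ B : gcd(y - b, M) = m }. Then for all x, y ∈ ℤ/Mℤ: ∑_{m ∣ M} 𝔸_m[x]·𝔹_m[y] / φ(M/m) = 1. -/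
/-!
Tijdeman's dilation theorem, in counting form: if `A ⊕ B` tiles a finite abelian group `G`
and `k` is coprime to `|G|`, then every `z` has exactly one representation `k • a + b`.
For a prime `p ∤ |G|`, Frobenius in `𝔽_p[G]` gives `(∑ X^{k•a})^p = ∑ X^{pk•a}`, and since
`(∑ X^{k•a}) (∑ X^b)` is the all-ones element, the representation counts of `p k` are
`≡ |A|^{p-1} ≢ 0 (mod p)`; as they sum to `|A| |B| = |G|`, they all equal `1`.

For `u, v ∈ ℤ/Mℤ` the units `r` with `r u = v` form a fiber of the surjection
`(ℤ/Mℤ)ˣ → (ℤ/(M/m)ℤ)ˣ` when `gcd(u, M) = gcd(v, M) = m`, and there are none otherwise. Hence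
the summand of pair `(a, b)` in the box product is `#{r | r (x - a) = b - y} / φ(M)`, and
exchanging the sums, each unit `r` contributes exactly one pair by Tijdeman's theorem.
-/

open Finset AddMonoidAlgebra
open scoped Nat

section Dilation

variable (R : Type*) [CommSemiring R] {G : Type*}

noncomputable def onesSum [Fintype G] : R[G] :=
  ∑ w : G, single w 1

theorem coeff_onesSum [Fintype G] (z : G) : (onesSum R : R[G]).coeff z = 1 := by
  classical
  rw [onesSum, coeff_sum, Finsupp.finsetSum_apply]
  simp_rw [coeff_single, Finsupp.single_apply]
  simp

instance AddMonoidAlgebra.charP [AddMonoid G] (p : ℕ) [CharP R p] : CharP R[G] p :=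
  charP_of_injective_ringHom (f := singleZeroRingHom) (single_right_injective (m := 0)) p

variable [AddCommGroup G]

def repCount [DecidableEq G] (A B : Finset G) (k : ℕ) (z : G) : ℕ :=
  #{ab ∈ A ×ˢ B | k • ab.1 + ab.2 = z}

noncomputable def dilatedSum (A : Finset G) (k : ℕ) : R[G] :=
  ∑ a ∈ A, single (k • a) 1

variable {R} (A B : Finset G)

theorem sum_repCount [DecidableEq G] [Fintype G] (k : ℕ) :
    ∑ z, repCount A B k z = #A * #B := by
  rw [← card_product, card_eq_sum_card_fiberwise (f := fun ab => k • ab.1 + ab.2)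
    (t := univ) (fun _ _ => mem_univ _)]
  rfl

theorem repCount_eq_one_of_ne_zero [DecidableEq G] [Fintype G] {k : ℕ}
    (hAB : #A * #B = Fintype.card G) (hk : ∀ z, repCount A B k z ≠ 0) (z : G) :
    repCount A B k z = 1 := by
  have hsum : ∑ w, repCount A B k w = ∑ _w : G, 1 := by
    rw [sum_repCount, hAB, sum_const, card_univ, smul_eq_mul, mul_one]
  exact ((sum_eq_sum_iff_of_le fun w _ => Nat.one_le_iff_ne_zero.2 (hk w)).1 hsum.symm z
    (mem_univ z)).symm

theorem coeff_dilatedSum_mul [DecidableEq G] (k : ℕ) (z : G) :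
    (dilatedSum R A k * dilatedSum R B 1).coeff z = repCount A B k z := by
  rw [dilatedSum, dilatedSum, sum_mul_sum, ← sum_product', coeff_sum, Finsupp.finsetSum_apply]
  simp_rw [single_mul_single, mul_one, one_smul, coeff_single, Finsupp.single_apply]
  rw [sum_boole, repCount]

theorem single_one_mul_onesSum [Fintype G] (w : G) :
    single w (1 : R) * onesSum R = onesSum R := by
  rw [onesSum, mul_sum]
  simp_rw [single_mul_single, one_mul]
  exact Fintype.sum_equiv (Equiv.addLeft w) _ _ fun _ => rfl

theorem dilatedSum_pow_mul_onesSum [Fintype G] (k n : ℕ) :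
    dilatedSum R A k ^ n * onesSum R = (#A ^ n) • onesSum R := by
  induction n with
  | zero => simp
  | succ n ih =>
    rw [pow_succ, mul_assoc, dilatedSum, sum_mul]
    simp_rw [single_one_mul_onesSum]
    rw [sum_const, ← dilatedSum, mul_smul_comm, ih, smul_smul, ← pow_succ']

theorem dilatedSum_pow_char (p : ℕ) [Fact p.Prime] [CharP R p] (k : ℕ) :
    dilatedSum R A k ^ p = dilatedSum R A (p * k) := by
  rw [dilatedSum, sum_pow_char]
  refine sum_congr rfl fun a _ => ?_
  rw [single_pow, one_pow, mul_nsmul']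

variable [DecidableEq G] [Fintype G] {A B}

theorem repCount_prime_mul (htile : ∀ z, repCount A B 1 z = 1) {p k : ℕ} (hp : p.Prime)
    (hpG : ¬ p ∣ Fintype.card G) (hk : ∀ z, repCount A B k z = 1) (z : G) :
    repCount A B (p * k) z = 1 := by
  have hAB : #A * #B = Fintype.card G := by
    rw [← sum_repCount A B 1]; simp [htile]
  have : Fact p.Prime := ⟨hp⟩
  have hones : dilatedSum (ZMod p) A k * dilatedSum (ZMod p) B 1 = onesSum (ZMod p) := by
    ext w
    rw [coeff_dilatedSum_mul, hk, coeff_onesSum, Nat.cast_one]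
  have hA : (#A : ZMod p) ≠ 0 := by
    rw [Ne, ZMod.natCast_eq_zero_iff]
    exact fun h => hpG (hAB ▸ h.mul_right _)
  refine repCount_eq_one_of_ne_zero A B hAB (fun w hw => ?_) z
  have hcoeff := coeff_dilatedSum_mul (R := ZMod p) A B (p * k) w
  rw [← dilatedSum_pow_char, ← pow_sub_one_mul hp.ne_zero, mul_assoc, hones,
    dilatedSum_pow_mul_onesSum, coeff_smul_apply, coeff_onesSum, hw, nsmul_eq_mul, mul_one,
    Nat.cast_pow, Nat.cast_zero] at hcoeff
  exact pow_ne_zero _ hA hcoeff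

theorem repCount_eq_one_of_coprime (htile : ∀ z, repCount A B 1 z = 1) {k : ℕ}
    (hk : k.Coprime (Fintype.card G)) (z : G) : repCount A B k z = 1 := by
  induction k using induction_on_primes generalizing z with
  | zero =>
    have : Subsingleton G :=
      Fintype.card_le_one_iff_subsingleton.1 (Nat.coprime_zero_left _ |>.1 hk).le
    rw [← htile z, repCount, repCount]
    congr! 2 with ab
    rw [Subsingleton.elim (0 • ab.1 + ab.2) (1 • ab.1 + ab.2)]
  | one => exact htile z
  | prime_mul p k hp ih =>
    have hpG : ¬ p ∣ Fintype.card G := (hp.coprime_iff_not_dvd).1 (hk.coprime_mul_right)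
    exact repCount_prime_mul htile hp hpG (ih hk.coprime_mul_left) z

end Dilation

theorem MonoidHom.card_fiber_mul_card_of_surjective {G H : Type*} [Group G] [Fintype G]
    [Group H] [Fintype H] [DecidableEq H] (f : G →* H) (hf : Function.Surjective f) (y : H) :
    #{g | f g = y} * Fintype.card H = Fintype.card G := by
  calc #{g | f g = y} * Fintype.card H = ∑ y' : H, #{g | f g = y'} := by
        rw [mul_comm, ← card_univ, ← smul_eq_mul, ← sum_const]
        exact sum_congr rfl fun y' _ => card_fiber_eq_of_mem_range f (hf y) (hf y')
    _ = Fintype.card G := (card_eq_sum_card_fiberwise fun _ _ => mem_univ _).symm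

namespace ZMod

variable {M : ℕ}

theorem gcd_val_dvd_gcd_val_mul (c w : ZMod M) : Nat.gcd w.val M ∣ Nat.gcd (c * w).val M := by
  refine Nat.dvd_gcd ?_ (Nat.gcd_dvd_right _ _)
  rw [val_mul]
  exact (Nat.dvd_mod_iff (Nat.gcd_dvd_right _ _)).2 ((Nat.gcd_dvd_left _ _).mul_left _)

theorem gcd_val_units_mul (r : (ZMod M)ˣ) (w : ZMod M) :
    Nat.gcd ((r : ZMod M) * w).val M = Nat.gcd w.val M := by
  refine Nat.dvd_antisymm ?_ (gcd_val_dvd_gcd_val_mul _ _)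
  simpa using gcd_val_dvd_gcd_val_mul (r⁻¹ : (ZMod M)ˣ) ((r : ZMod M) * w)

theorem gcd_val_neg (w : ZMod M) : Nat.gcd (-w).val M = Nat.gcd w.val M := by
  simpa using gcd_val_units_mul (-1) w

variable [NeZero M]

theorem natCast_gcd_mul_natCast_div (w : ZMod M) :
    (Nat.gcd w.val M : ZMod M) * ((w.val / Nat.gcd w.val M : ℕ) : ZMod M) = w := by
  rw [← Nat.cast_mul, Nat.mul_div_cancel' (Nat.gcd_dvd_left _ _), natCast_zmod_val]

theorem natCast_mul_eq_natCast_mul_iff {m : ℕ} (hm : m ∣ M) (x y : ZMod M) :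
    (m : ZMod M) * x = m * y ↔
      castHom (Nat.div_dvd_of_dvd hm) (ZMod (M / m)) x = castHom (Nat.div_dvd_of_dvd hm) _ y := by
  have hm0 : 0 < m := Nat.pos_of_dvd_of_pos hm (NeZero.pos M)
  rw [← sub_eq_zero, ← mul_sub, ← sub_eq_zero (a := castHom _ _ x), ← map_sub,
    ← natCast_zmod_val (x - y), map_natCast, ← Nat.cast_mul, natCast_eq_zero_iff,
    natCast_eq_zero_iff]
  generalize (x - y).val = n
  nth_rw 1 [← Nat.mul_div_cancel' hm]
  exact Nat.mul_dvd_mul_iff_left hm0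

theorem card_units_mul_eq_mul_totient {u v : ZMod M} (h : Nat.gcd u.val M = Nat.gcd v.val M) :
    #{r : (ZMod M)ˣ | (r : ZMod M) * u = v} * φ (M / Nat.gcd u.val M) = φ M := by
  set m := Nat.gcd u.val M
  have hm : m ∣ M := Nat.gcd_dvd_right _ _
  have hm0 : 0 < m := Nat.gcd_pos_of_pos_right _ (NeZero.pos M)
  have hdM : M / m ∣ M := Nat.div_dvd_of_dvd hm
  have : NeZero (M / m) := ⟨(Nat.div_pos (Nat.le_of_dvd (NeZero.pos M) hm) hm0).ne'⟩
  let S := unitOfCoprime (u.val / m) (Nat.coprime_div_gcd_div_gcd hm0)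
  let T := unitOfCoprime (v.val / m) (h ▸ Nat.coprime_div_gcd_div_gcd (h ▸ hm0))
  -- With `u = m * s` and `v = m * t`, `r * u = v` says `r * s ≡ t` modulo `M / m`.
  have hiff (r : (ZMod M)ˣ) : (r : ZMod M) * u = v ↔ unitsMap hdM r = T * S⁻¹ := by
    rw [eq_mul_inv_iff_mul_eq, Units.ext_iff, Units.val_mul, unitsMap_val, coe_unitOfCoprime,
      coe_unitOfCoprime, ← castHom_apply (h := hdM)]
    nth_rw 1 [← natCast_gcd_mul_natCast_div u, ← natCast_gcd_mul_natCast_div v, ← h]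
    rw [mul_left_comm, natCast_mul_eq_natCast_mul_iff hm, map_mul, map_natCast, map_natCast, ← h]
  rw [filter_congr fun r _ => hiff r, ← card_units_eq_totient, ← card_units_eq_totient]
  exact (unitsMap hdM).card_fiber_mul_card_of_surjective (unitsMap_surjective hdM) _

theorem card_units_mul_eq_zero {u v : ZMod M} (h : Nat.gcd u.val M ≠ Nat.gcd v.val M) :
    #{r : (ZMod M)ˣ | (r : ZMod M) * u = v} = 0 := by
  rw [card_eq_zero, filter_eq_empty_iff]
  rintro r - rfl
  exact h (gcd_val_units_mul r u).symm

theorem sum_divisors_ite_gcd_eq_card_units_div (u v : ZMod M) :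
    ∑ m ∈ M.divisors,
        (if Nat.gcd u.val M = m ∧ Nat.gcd v.val M = m then (φ (M / m) : ℚ)⁻¹ else 0) =
      #{r : (ZMod M)ˣ | (r : ZMod M) * u = v} / φ M := by
  by_cases h : Nat.gcd u.val M = Nat.gcd v.val M
  · have hmem : Nat.gcd u.val M ∈ M.divisors :=
      Nat.mem_divisors.2 ⟨Nat.gcd_dvd_right _ _, NeZero.ne M⟩
    have hprod : (#{r : (ZMod M)ˣ | (r : ZMod M) * u = v} * φ (M / Nat.gcd u.val M) : ℚ) = φ M :=
      mod_cast card_units_mul_eq_mul_totient h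
    have hφ : (φ M : ℚ) ≠ 0 := by exact_mod_cast (Nat.totient_pos.2 (NeZero.pos M)).ne'
    rw [← hprod] at hφ
    simp_rw [← h, and_self]
    rw [sum_ite_eq, if_pos hmem, ← hprod]
    field_simp [left_ne_zero_of_mul hφ, right_ne_zero_of_mul hφ]
  · rw [card_units_mul_eq_zero h, Nat.cast_zero, zero_div]
    exact sum_eq_zero fun m _ => if_neg fun hm => h (hm.1.trans hm.2.symm)

end ZMod

namespace IsTiling

variable {M : ℕ} {A B : Finset (ZMod M)}

theorem repCount_one (hT : IsTiling A B) (z : ZMod M) : repCount A B 1 z = 1 := by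
  obtain ⟨ab, hab, huniq⟩ := hT z
  rw [repCount, card_eq_one]
  refine ⟨ab, eq_singleton_iff_unique_mem.2 ⟨?_, fun cd hcd => huniq cd ?_⟩⟩
  · simpa [and_assoc] using hab
  · simpa [and_assoc] using hcd

theorem card_filter_units_mul_sub_eq_one [NeZero M] (hT : IsTiling A B) (r : (ZMod M)ˣ)
    (x y : ZMod M) : #{p ∈ A ×ˢ B | (r : ZMod M) * (x - p.1) = p.2 - y} = 1 := by
  have hr : (r : ZMod M).val.Coprime (Fintype.card (ZMod M)) := by
    rw [ZMod.card]; exact ZMod.val_coe_unit_coprime r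
  rw [← repCount_eq_one_of_coprime hT.repCount_one hr (r * x + y), repCount]
  congr! 2 with p
  rw [nsmul_eq_mul, ZMod.natCast_zmod_val]
  constructor <;> intro h <;> linear_combination -h

end IsTiling

theorem box_product_identity (M : ℕ) (hM : 0 < M)
    (A B : Finset (ZMod M)) (hT : IsTiling A B) (x y : ZMod M) :
    ∑ m ∈ Nat.divisors M,
      ((A.filter (fun a => Nat.gcd (x - a).val M = m)).card *
        (B.filter (fun b => Nat.gcd (y - b).val M = m)).card : ℚ) /
        (Nat.totient (M / m) : ℚ) = 1 := by
  have : NeZero M := ⟨hM.ne'⟩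
  have hneg (b : ZMod M) : Nat.gcd (b - y).val M = Nat.gcd (y - b).val M := by
    rw [← neg_sub, ZMod.gcd_val_neg]
  calc _ = ∑ m ∈ M.divisors, ∑ p ∈ A ×ˢ B,
          (if Nat.gcd (x - p.1).val M = m ∧ Nat.gcd (p.2 - y).val M = m
            then (φ (M / m) : ℚ)⁻¹ else 0) := by
        refine sum_congr rfl fun m _ => ?_
        rw [← sum_filter, sum_const, nsmul_eq_mul, div_eq_mul_inv]
        simp_rw [hneg]
        rw [filter_product (fun a => Nat.gcd (x - a).val M = m)
          (fun b => Nat.gcd (y - b).val M = m), card_product, Nat.cast_mul]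
    _ = ∑ p ∈ A ×ˢ B, (#{r : (ZMod M)ˣ | (r : ZMod M) * (x - p.1) = p.2 - y} : ℚ) / φ M := by
        rw [sum_comm]
        simp_rw [ZMod.sum_divisors_ite_gcd_eq_card_units_div]
    _ = (∑ r : (ZMod M)ˣ, #{p ∈ A ×ˢ B | (r : ZMod M) * (x - p.1) = p.2 - y} : ℕ) / φ M := by
        rw [← sum_div, ← Nat.cast_sum]
        congr 2
        exact sum_card_bipartiteAbove_eq_sum_card_bipartiteBelow _
    _ = 1 := by
        simp_rw [hT.card_filter_units_mul_sub_eq_one]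
        rw [sum_const, card_univ, ZMod.card_units_eq_totient, smul_eq_mul, mul_one]
        exact div_self (by exact_mod_cast (Nat.totient_pos.2 hM).ne')
end

section
/- Let A ⊕ B = ℤ/Mℤ be a tiling and let z, z' ∈ ℤ/Mℤ. Suppose a + b = z and a' + b' = z' with a, a' ∈ A, b, b' ∈ B. Then for every m dividing z - z' (i.e., every m ∣ M with (z - z') ∈ m·ℤ/Mℤ), we have gcd(a - a', m) = gcd(b - b', m). -/
lemma gcd_eq_of_dvd_add {x y m : ℕ} (h : m ∣ x + y) : Nat.gcd x m = Nat.gcd y m := by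
  have hx : Nat.gcd x m ∣ y := by
    have : Nat.gcd x m ∣ x + y := (Nat.gcd_dvd_right x m).trans h
    simpa using Nat.dvd_sub this (Nat.gcd_dvd_left x m)
  have hy : Nat.gcd y m ∣ x := by
    have : Nat.gcd y m ∣ x + y := (Nat.gcd_dvd_right y m).trans h
    simpa [Nat.add_comm] using Nat.dvd_sub this (Nat.gcd_dvd_left y m)
  exact Nat.dvd_antisymm (Nat.dvd_gcd hx (Nat.gcd_dvd_right x m))
    (Nat.dvd_gcd hy (Nat.gcd_dvd_right y m))

theorem gcd_match_on_divisors (M : ℕ) (hM : 0 < M)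
    (A B : Finset (ZMod M)) (hT : IsTiling A B)
    (z z' : ZMod M) (a a' b b' : ZMod M)
    (ha : a ∈ A) (ha' : a' ∈ A) (hb : b ∈ B) (hb' : b' ∈ B)
    (hz : a + b = z) (hz' : a' + b' = z') :
    ∀ m : ℕ, m ∣ M → ((m : ZMod M) ∣ (z - z')) →
      Nat.gcd (a - a').val m = Nat.gcd (b - b').val m := by
  intro m hmM hdvd
  haveI : NeZero M := ⟨hM.ne'⟩
  obtain ⟨k, hk⟩ := hdvd
  have h1 : m ∣ (z - z').val := by
    rw [hk, ZMod.val_mul, Nat.dvd_mod_iff hmM]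
    refine Dvd.dvd.mul_right ?_ _
    rw [ZMod.val_natCast]
    exact (Nat.dvd_mod_iff hmM).mpr dvd_rfl
  have h2 : z - z' = (a - a') + (b - b') := by rw [← hz, ← hz']; ring
  have h3 : m ∣ (a - a').val + (b - b').val := by
    rw [← Nat.dvd_mod_iff hmM, ← ZMod.val_add, ← h2]; exact h1
  exact gcd_eq_of_dvd_add h3
end

section
/- Let M = p₁^{n₁} ⋯ p_K^{n_K} and A ⊕ B = ℤ/Mℤ a tiling. Suppose a + b = z and a' + b' = z' with a, a' ∈ A, b, b' ∈ B, and suppose p_i^{n_i} divides z - z' for some i. Then gcd(a - a', p_i^{n_i}) = gcd(b - b', p_i^{n_i}), i.e., a - a' and b - b' match in the p_i direction. -/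
private lemma gcd_dvd_other {q u v : ℕ} (h : q ∣ u + v) : Nat.gcd u q ∣ v := by
  have h1 : Nat.gcd u q ∣ u + v := (Nat.gcd_dvd_right u q).trans h
  have h2 := Nat.dvd_sub h1 (Nat.gcd_dvd_left u q)
  simpa using h2

private lemma gcd_eq_of_dvd_add_s11 {q u v : ℕ} (h : q ∣ u + v) :
    Nat.gcd u q = Nat.gcd v q :=
  Nat.dvd_antisymm
    (Nat.dvd_gcd (gcd_dvd_other h) (Nat.gcd_dvd_right _ _))
    (Nat.dvd_gcd (gcd_dvd_other (by rwa [Nat.add_comm] at h)) (Nat.gcd_dvd_right _ _))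

theorem match_in_direction (M K : ℕ)
    (p : Fin K → ℕ) (hp : ∀ ν, (p ν).Prime)
    (hdist : Function.Injective p)
    (n : Fin K → ℕ) (hn : ∀ ν, 1 ≤ n ν)
    (hM : M = ∏ ν, p ν ^ n ν)
    (A B : Finset (ZMod M)) (hT : IsTiling A B)
    (z z' : ZMod M) (a a' b b' : ZMod M)
    (ha : a ∈ A) (ha' : a' ∈ A) (hb : b ∈ B) (hb' : b' ∈ B)
    (hz : a + b = z) (hz' : a' + b' = z')
    (i : Fin K) (hdvd : ((p i ^ n i : ℕ) : ZMod M) ∣ (z - z')) :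
    Nat.gcd (a - a').val (p i ^ n i) = Nat.gcd (b - b').val (p i ^ n i) := by
  set q : ℕ := p i ^ n i with hqdef
  have hqM : q ∣ M := hM ▸ Finset.dvd_prod_of_mem _ (Finset.mem_univ i)
  have hMpos : 0 < M := by
    rw [hM]
    exact Finset.prod_pos fun ν _ => pow_pos (hp ν).pos _
  have hqpos : 0 < q := pow_pos (hp i).pos _
  haveI : NeZero M := ⟨hMpos.ne'⟩
  haveI : NeZero q := ⟨hqpos.ne'⟩
  -- the sum identity
  have hsum : (a - a') + (b - b') = z - z' := by
    rw [← hz, ← hz']; ring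
  obtain ⟨c, hc⟩ := hdvd
  -- map through ZMod.castHom to ZMod q
  let f : ZMod M →+* ZMod q := ZMod.castHom hqM (ZMod q)
  have hf : f ((a - a') + (b - b')) = 0 := by
    rw [hsum, hc, map_mul, map_natCast, ZMod.natCast_self, zero_mul]
  have hfv : ∀ x : ZMod M, f x = ((x.val : ℕ) : ZMod q) := by
    intro x
    simp [f, ZMod.natCast_val, ZMod.castHom_apply]
  have hzero : (((a - a').val + (b - b').val : ℕ) : ZMod q) = 0 := by
    push_cast
    rw [← hfv, ← hfv, ← map_add, hf]
  have hdvd' : q ∣ (a - a').val + (b - b').val :=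
    (ZMod.natCast_eq_zero_iff _ _).mp hzero
  exact gcd_eq_of_dvd_add_s11 hdvd'
end

section
/- Let A ⊕ B = ℤ/Mℤ be a tiling. Then it is impossible to have a, a' ∈ A and b, b' ∈ B with (a, b) ≠ (a', b') and gcd(a - a', M) = gcd(b - b', M). -/
open Finset MulAction

/-- Number of representations `z = α + c·β` with `α ∈ A`, `β ∈ B`, counted via `β`. -/
def cnt {M : ℕ} (A B : Finset (ZMod M)) (c z : ZMod M) : ℕ :=
  (B.filter (fun β => z - c * β ∈ A)).card

lemma cnt_one {M : ℕ} {A B : Finset (ZMod M)} (hT : IsTiling A B) (z : ZMod M) :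
    cnt A B 1 z = 1 := by
  obtain ⟨⟨α₀, β₀⟩, ⟨hA, hB, hsum⟩, huniq⟩ := hT z
  rw [cnt, Finset.card_eq_one]
  refine ⟨β₀, ?_⟩
  ext β
  simp only [Finset.mem_filter, Finset.mem_singleton, one_mul]
  constructor
  · rintro ⟨hβ, hAβ⟩
    have h := huniq (z - β, β) ⟨hAβ, hβ, by ring⟩
    exact congrArg Prod.snd h
  · rintro rfl
    have h2 : z - β = α₀ := by rw [← hsum]; ring
    exact ⟨hB, h2 ▸ hA⟩

lemma cnt_sum {M : ℕ} [NeZero M] (A B : Finset (ZMod M)) (c : ZMod M) :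
    ∑ z : ZMod M, cnt A B c z = A.card * B.card := by
  unfold cnt
  simp only [Finset.card_filter]
  rw [Finset.sum_comm]
  have h1 : ∀ y : ZMod M, (∑ x : ZMod M, if x - c * y ∈ A then 1 else 0) = A.card := by
    intro y
    rw [← Equiv.sum_comp (Equiv.addRight (c * y)) (fun x => if x - c * y ∈ A then (1:ℕ) else 0)]
    simp [Finset.card_filter, Finset.filter_univ_mem]
  simp [h1, mul_comm]

lemma cnt_single {M : ℕ} {A B : Finset (ZMod M)} {c : ZMod M}
    (hT : ∀ z, cnt A B c z = 1) (z' : ZMod M) :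
    ∀ β ∈ B, ∀ β' ∈ B, z' - c * β ∈ A → z' - c * β' ∈ A → β = β' := by
  intro β hβ β' hβ' h1 h2
  have h := (hT z').le
  rw [cnt] at h
  exact Finset.card_le_one.mp h β (mem_filter.mpr ⟨hβ, h1⟩) β' (mem_filter.mpr ⟨hβ', h2⟩)

lemma orbit_count {p : ℕ} [Fact p.Prime] {γ : Type} [DecidableEq γ]
    (T : Finset (ZMod p → γ))
    (hT : ∀ f ∈ T, ∀ g : ZMod p, (fun i => f (i + g)) ∈ T) :
    T.card ≡ (T.filter (fun f => ∀ i, f i = f 0)).card [MOD p] := by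
  haveI : NeZero p := ⟨(Fact.out : p.Prime).ne_zero⟩
  letI G := Multiplicative (ZMod p)
  letI : SMul G {f // f ∈ T} :=
    ⟨fun g f => ⟨fun i => f.1 (i + g.toAdd), hT f.1 f.2 g.toAdd⟩⟩
  have smul_def : ∀ (g : G) (f : {f // f ∈ T}), (g • f).1 = fun i => f.1 (i + g.toAdd) :=
    fun g f => rfl
  letI : MulAction G {f // f ∈ T} :=
    { one_smul := fun f => by
        apply Subtype.ext; rw [smul_def]; funext i
        show f.1 (i + (0 : ZMod p)) = f.1 i
        rw [add_zero]
      mul_smul := fun g h f => by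
        apply Subtype.ext; rw [smul_def, smul_def, smul_def]; funext i
        show f.1 (i + (g.toAdd + h.toAdd)) = f.1 (i + g.toAdd + h.toAdd)
        rw [add_assoc] }
  have hG : IsPGroup p G := IsPGroup.of_card (by
    rw [pow_one]
    exact Nat.card_zmod p)
  have key := hG.card_modEq_card_fixedPoints {f // f ∈ T}
  have h1 : Nat.card {f // f ∈ T} = T.card := Nat.card_eq_finsetCard T
  have h2 : Nat.card (fixedPoints G {f // f ∈ T})
      = (T.filter (fun f => ∀ i, f i = f 0)).card := by
    rw [← Nat.card_eq_finsetCard]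
    apply Nat.card_congr
    refine ⟨fun x => ⟨x.1.1, ?_⟩, fun y => ⟨⟨y.1, (mem_filter.mp y.2).1⟩, ?_⟩, ?_, ?_⟩
    · obtain ⟨⟨f, hf⟩, hfix⟩ := x
      rw [mem_filter]
      refine ⟨hf, fun i => ?_⟩
      have h3 := hfix (Multiplicative.ofAdd i)
      have h4 := congrFun (congrArg Subtype.val h3) 0
      rw [smul_def] at h4
      simpa using h4
    · obtain ⟨f, hf⟩ := y
      have hc := (mem_filter.mp hf).2
      intro g
      apply Subtype.ext; rw [smul_def]; funext i
      exact (hc (i + g.toAdd)).trans (hc i).symm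
    · intro x; apply Subtype.ext; apply Subtype.ext; rfl
    · intro y; apply Subtype.ext; rfl
  rw [← h1, ← h2]
  exact key

lemma cnt_congr {M p : ℕ} (hp : p.Prime)
    {A B : Finset (ZMod M)} {c : ZMod M} (hT : ∀ z, cnt A B c z = 1) (z : ZMod M) :
    cnt A B ((p : ZMod M) * c) z ≡ B.card ^ (p - 1) [MOD p] := by
  haveI : Fact p.Prime := ⟨hp⟩
  haveI : NeZero p := ⟨hp.ne_zero⟩
  classical
  set T : Finset (ZMod p → ZMod M) :=
    (Fintype.piFinset fun _ => B).filter (fun f => z - c * ∑ i, f i ∈ A) with hTdef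
  -- sum splitting
  have hsplit : ∀ f : ZMod p → ZMod M, ∑ i, f i = f 0 + ∑ j : {i : ZMod p // i ≠ 0}, f j.1 := by
    intro f
    rw [← Finset.sum_subtype (Finset.univ.erase 0) (fun i => by simp) f]
    exact (Finset.add_sum_erase Finset.univ f (mem_univ 0)).symm
  -- shift invariance
  have hshift : ∀ f ∈ T, ∀ g : ZMod p, (fun i => f (i + g)) ∈ T := by
    intro f hf g
    rw [hTdef, mem_filter] at hf ⊢
    obtain ⟨hf1, hf2⟩ := hf
    rw [Fintype.mem_piFinset] at hf1 ⊢
    refine ⟨fun i => hf1 (i + g), ?_⟩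
    have hsum : ∑ i, f (i + g) = ∑ i, f i :=
      Fintype.sum_equiv (Equiv.addRight g) (fun i => f (i + g)) f (fun i => rfl)
    show z - c * ∑ i, f (i + g) ∈ A
    rwa [hsum]
  -- card of T
  have hcardT : T.card = B.card ^ (p - 1) := by
    have hbij : T.card = (Fintype.piFinset fun _ : {i : ZMod p // i ≠ 0} => B).card := by
      apply Finset.card_bij (fun f _ => fun j : {i : ZMod p // i ≠ 0} => f j.1)
      · intro f hf
        rw [hTdef, mem_filter, Fintype.mem_piFinset] at hf
        rw [Fintype.mem_piFinset]
        exact fun j => hf.1 j.1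
      · intro f hf g hg hfg
        rw [hTdef, mem_filter, Fintype.mem_piFinset] at hf hg
        have hS : ∑ j : {i : ZMod p // i ≠ 0}, f j.1 = ∑ j : {i : ZMod p // i ≠ 0}, g j.1 := by
          exact Finset.sum_congr rfl (fun j _ => congrFun hfg j)
        have h0 : f 0 = g 0 := by
          apply cnt_single hT (z - c * ∑ j : {i : ZMod p // i ≠ 0}, f j.1) _ (hf.1 0) _ (hg.1 0)
          · have h5 := hf.2
            rw [hsplit f] at h5
            have heq : z - c * ∑ j : {i : ZMod p // i ≠ 0}, f j.1 - c * f 0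
                = z - c * (f 0 + ∑ j : {i : ZMod p // i ≠ 0}, f j.1) := by ring
            rw [heq]; exact h5
          · have h5 := hg.2
            rw [hsplit g, ← hS] at h5
            have heq : z - c * ∑ j : {i : ZMod p // i ≠ 0}, f j.1 - c * g 0
                = z - c * (g 0 + ∑ j : {i : ZMod p // i ≠ 0}, f j.1) := by ring
            rw [heq]; exact h5
        funext i
        by_cases hi : i = 0
        · rw [hi]; exact h0
        · exact congrFun hfg ⟨i, hi⟩
      · intro gfun hgfun
        rw [Fintype.mem_piFinset] at hgfun
        set S := ∑ j : {i : ZMod p // i ≠ 0}, gfun j with hS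
        obtain ⟨β, hβ⟩ := Finset.card_eq_one.mp (hT (z - c * S))
        have hβmem : β ∈ B.filter (fun β => (z - c * S) - c * β ∈ A) := by
          rw [hβ]; exact mem_singleton_self β
        rw [mem_filter] at hβmem
        refine ⟨fun i => if h : i = 0 then β else gfun ⟨i, h⟩, ?_, ?_⟩
        · rw [hTdef, mem_filter, Fintype.mem_piFinset]
          constructor
          · intro i
            by_cases hi : i = 0
            · rw [dif_pos hi]; exact hβmem.1
            · rw [dif_neg hi]; exact hgfun ⟨i, hi⟩
          · rw [hsplit]
            have e1 : (if h : (0:ZMod p) = 0 then β else gfun ⟨0, h⟩) = β := dif_pos rfl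
            have e2 : ∑ j : {i : ZMod p // i ≠ 0}, (if h : j.1 = 0 then β else gfun ⟨j.1, h⟩) = S := by
              rw [hS]
              exact Finset.sum_congr rfl (fun j _ => by rw [dif_neg j.2])
            rw [e1, e2]
            have heq : z - c * (β + S) = z - c * S - c * β := by ring
            rw [heq]; exact hβmem.2
        · funext j
          exact dif_neg j.2
    rw [hbij, Fintype.card_piFinset]
    rw [Finset.prod_const, Finset.card_univ]
    congr 1
    rw [Fintype.card_subtype_compl, Fintype.card_subtype_eq (0 : ZMod p), ZMod.card]
  -- fixed points count
  have hfix : (T.filter (fun f => ∀ i, f i = f 0)).card = cnt A B ((p : ZMod M) * c) z := by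
    rw [cnt]
    apply Finset.card_bij (fun f _ => f 0)
    · intro f hf
      rw [mem_filter] at hf
      obtain ⟨hf1, hconst⟩ := hf
      rw [hTdef, mem_filter, Fintype.mem_piFinset] at hf1
      rw [mem_filter]
      refine ⟨hf1.1 0, ?_⟩
      have hsum : ∑ i, f i = (p : ZMod M) * f 0 := by
        calc ∑ i : ZMod p, f i = ∑ _i : ZMod p, f 0 := Finset.sum_congr rfl (fun i _ => hconst i)
        _ = (Fintype.card (ZMod p)) • f 0 := by rw [Finset.sum_const, Finset.card_univ]
        _ = (p : ZMod M) * f 0 := by rw [ZMod.card, nsmul_eq_mul]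
      have h5 := hf1.2
      rw [hsum] at h5
      have heq : z - ((p : ZMod M) * c) * f 0 = z - c * ((p : ZMod M) * f 0) := by ring
      rw [heq]; exact h5
    · intro f hf g hg hfg
      rw [mem_filter] at hf hg
      funext i
      rw [hf.2 i, hg.2 i, hfg]
    · intro β hβ
      rw [mem_filter] at hβ
      refine ⟨fun _ => β, ?_, rfl⟩
      rw [mem_filter, hTdef, mem_filter, Fintype.mem_piFinset]
      refine ⟨⟨fun _ => hβ.1, ?_⟩, fun _ => rfl⟩
      have hsum : ∑ _i : ZMod p, β = (p : ZMod M) * β := by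
        rw [Finset.sum_const, Finset.card_univ, ZMod.card, nsmul_eq_mul]
      rw [hsum]
      have heq : z - c * ((p : ZMod M) * β) = z - ((p : ZMod M) * c) * β := by ring
      rw [heq]; exact hβ.2
  calc cnt A B ((p : ZMod M) * c) z = (T.filter (fun f => ∀ i, f i = f 0)).card := hfix.symm
  _ ≡ T.card [MOD p] := (orbit_count T hshift).symm
  _ = B.card ^ (p - 1) := hcardT

lemma cnt_mul_prime {M p : ℕ} [NeZero M] (hp : p.Prime) (hpM : ¬ p ∣ M)
    {A B : Finset (ZMod M)} {c : ZMod M} (hT : ∀ z, cnt A B c z = 1) :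
    ∀ z, cnt A B ((p : ZMod M) * c) z = 1 := by
  have hAB : A.card * B.card = M := by
    have h1 := cnt_sum A B c
    rw [Finset.sum_congr rfl (fun z _ => hT z)] at h1
    simpa [ZMod.card] using h1.symm
  have hpB : ¬ p ∣ B.card := by
    intro h
    exact hpM (h.trans (Dvd.intro_left A.card hAB))
  haveI : Fact p.Prime := ⟨hp⟩
  have hferm : B.card ^ (p - 1) ≡ 1 [MOD p] := by
    have h0 : (B.card : ZMod p) ≠ 0 := by
      rw [Ne, ZMod.natCast_eq_zero_iff]
      exact hpB
    have h1 := ZMod.pow_card_sub_one_eq_one h0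
    have h2 : ((B.card ^ (p - 1) : ℕ) : ZMod p) = ((1 : ℕ) : ZMod p) := by
      push_cast
      rw [h1]
    exact (ZMod.natCast_eq_natCast_iff _ _ _).mp h2
  have hcong : ∀ z, cnt A B ((p : ZMod M) * c) z ≡ 1 [MOD p] :=
    fun z => (cnt_congr hp hT z).trans hferm
  have hsum : ∑ z : ZMod M, cnt A B ((p : ZMod M) * c) z = Fintype.card (ZMod M) := by
    rw [cnt_sum, hAB, ZMod.card]
  have hpos : ∀ z, 1 ≤ cnt A B ((p : ZMod M) * c) z := by
    intro z
    rcases Nat.eq_zero_or_pos (cnt A B ((p : ZMod M) * c) z) with h | h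
    · exfalso
      have h2 := hcong z
      rw [h] at h2
      have h3 : p ∣ 1 - 0 := (Nat.modEq_iff_dvd' (Nat.zero_le 1)).mp h2
      simp at h3
      exact hp.one_lt.ne' h3
    · exact h
  intro z
  by_contra hne
  have h2 : 2 ≤ cnt A B ((p : ZMod M) * c) z := lt_of_le_of_ne (hpos z) (Ne.symm hne)
  have h3 : ∑ _z' : ZMod M, 1 < ∑ z' : ZMod M, cnt A B ((p : ZMod M) * c) z' :=
    Finset.sum_lt_sum (fun i _ => hpos i) ⟨z, Finset.mem_univ z, h2⟩
  rw [hsum] at h3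
  simp at h3

lemma cnt_mul_coprime {M : ℕ} [NeZero M] {A B : Finset (ZMod M)} :
    ∀ k : ℕ, Nat.Coprime k M → ∀ c : ZMod M, (∀ z, cnt A B c z = 1) →
      ∀ z, cnt A B ((k : ZMod M) * c) z = 1 := by
  intro k
  induction k using Nat.strong_induction_on with
  | _ k ih =>
    intro hk c hT z
    rcases eq_or_ne k 1 with rfl | hk1
    · simpa using hT z
    rcases eq_or_ne k 0 with rfl | hk0
    · have hM1 : M = 1 := by simpa [Nat.Coprime] using hk
      have h : ((0 : ℕ) : ZMod M) * c = c := by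
        subst hM1
        exact Subsingleton.elim _ _
      rw [h]
      exact hT z
    · obtain ⟨p, hp, hdvd⟩ := Nat.exists_prime_and_dvd hk1
      obtain ⟨k', rfl⟩ := hdvd
      have hk' : Nat.Coprime k' M := Nat.Coprime.coprime_dvd_left ⟨p, mul_comm p k'⟩ hk
      have hpM : ¬ p ∣ M := by
        intro h
        have hpk : p ∣ p * k' := ⟨k', rfl⟩
        have h1 : p ∣ 1 := hk ▸ Nat.dvd_gcd hpk h
        exact hp.one_lt.ne' (Nat.dvd_one.mp h1)
      have hk'pos : 0 < k' := Nat.pos_of_ne_zero (by rintro rfl; simp at hk0)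
      have hlt : k' < p * k' := by
        calc k' = 1 * k' := (one_mul k').symm
        _ < p * k' := (Nat.mul_lt_mul_right hk'pos).mpr hp.one_lt
      have h1 := ih k' hlt hk' c hT
      have h2 := cnt_mul_prime hp hpM h1 z
      have h3 : (((p * k' : ℕ)) : ZMod M) * c = (p : ZMod M) * ((k' : ZMod M) * c) := by
        push_cast
        ring
      rw [h3]
      exact h2

lemma exists_coprime_mul_eq {M : ℕ} [NeZero M] (hM : 0 < M) (g w : ZMod M)
    (hgcd : Nat.gcd g.val M = Nat.gcd w.val M) :
    ∃ k : ℕ, Nat.Coprime k M ∧ ((k : ℕ) : ZMod M) * w = g := by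
  set d := Nat.gcd w.val M with hddef
  set d := Nat.gcd w.val M with hddef
  have hgcd' : Nat.gcd g.val M = d := hgcd
  have dpos : 0 < d := Nat.gcd_pos_of_pos_right _ hM
  have hdM : d ∣ M := Nat.gcd_dvd_right _ _
  have hdw : d ∣ w.val := Nat.gcd_dvd_left _ _
  have hdg : d ∣ g.val := hgcd' ▸ Nat.gcd_dvd_left _ _
  set n := M / d with hndef
  have hnM : n ∣ M := Nat.div_dvd_of_dvd hdM
  have npos : 0 < n := Nat.div_pos (Nat.le_of_dvd hM hdM) dpos
  haveI : NeZero n := ⟨npos.ne'⟩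
  set x := Nat.gcdA w.val M with hxdef
  set y := Nat.gcdB w.val M with hydef
  have hbez : (d : ℤ) = w.val * x + M * y := Nat.gcd_eq_gcd_ab w.val M
  set eh := w.val / d with hehdef
  set eg := g.val / d with hegdef
  have hehd : (eh : ℤ) * d = (w.val : ℤ) := by
    exact_mod_cast congrArg (Nat.cast : ℕ → ℤ) (Nat.div_mul_cancel hdw)
  have hegd : (eg : ℤ) * d = (g.val : ℤ) := by
    exact_mod_cast congrArg (Nat.cast : ℕ → ℤ) (Nat.div_mul_cancel hdg)
  have hnd : (n : ℤ) * d = (M : ℤ) := by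
    exact_mod_cast congrArg (Nat.cast : ℕ → ℤ) (Nat.div_mul_cancel hdM)
  have hd0 : (d : ℤ) ≠ 0 := by exact_mod_cast dpos.ne'
  have hbez1 : (1 : ℤ) = eh * x + n * y := by
    apply mul_left_cancel₀ hd0
    calc (d : ℤ) * 1 = (d : ℤ) := mul_one _
    _ = w.val * x + M * y := hbez
    _ = ((eh : ℤ) * d) * x + ((n : ℤ) * d) * y := by rw [hehd, hnd]
    _ = d * (eh * x + n * y) := by ring
  have hx : IsCoprime (x : ℤ) (n : ℤ) := ⟨eh, y, by linarith [hbez1]⟩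
  have heg : IsCoprime ((eg : ℤ)) (n : ℤ) := by
    rw [Nat.isCoprime_iff_coprime]
    have h := Nat.coprime_div_gcd_div_gcd (m := g.val) (n := M) (by rw [hgcd']; exact dpos)
    rwa [hgcd'] at h
  set t : ℤ := eg * x with htdef
  have ht : IsCoprime t (n : ℤ) := IsCoprime.mul_left heg hx
  have hn0 : (n : ℤ) ≠ 0 := by exact_mod_cast npos.ne'
  set t0 : ℕ := (t % n).toNat with ht0def
  have ht0 : (t0 : ℤ) = t % n := Int.toNat_of_nonneg (Int.emod_nonneg t hn0)
  have htmod : IsCoprime ((t0 : ℤ)) ((n : ℤ)) := by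
    rw [ht0, Int.emod_def]
    have h := IsCoprime.add_mul_left_left ht (-(t / n))
    simpa [sub_eq_add_neg, mul_neg] using h
  have cop0 : Nat.Coprime t0 n := Nat.isCoprime_iff_coprime.mp htmod
  have hunit : IsUnit ((t0 : ZMod n)) := (ZMod.isUnit_iff_coprime t0 n).mpr cop0
  obtain ⟨u, hu⟩ := ZMod.unitsMap_surjective hnM hunit.unit
  set k := (u : ZMod M).val with hkdef
  have hkcop : Nat.Coprime k M := ZMod.val_coe_unit_coprime u
  have hcast : ((k : ℕ) : ZMod n) = ((t0 : ℕ) : ZMod n) := by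
    have h6 := congrArg (Units.val) hu
    rw [ZMod.unitsMap_def, Units.coe_map, IsUnit.unit_spec] at h6
    rw [ZMod.natCast_val]
    simpa using h6
  have h7 : k ≡ t0 [MOD n] := (ZMod.natCast_eq_natCast_iff _ _ _).mp hcast
  obtain ⟨s1, hs1⟩ := h7.dvd
  obtain ⟨s2, hs2⟩ : (n : ℤ) ∣ (t0 : ℤ) - t := ⟨-(t / n), by rw [ht0, Int.emod_def]; ring⟩
  have hmodn : ((k : ℕ) : ℤ) = t + (n : ℤ) * (s2 - s1) := by
    rw [mul_sub, ← hs1, ← hs2]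
    ring
  -- casts of values
  have hw : ((w.val : ℕ) : ZMod M) = w := by rw [ZMod.natCast_val, ZMod.cast_id]
  have hg : ((g.val : ℕ) : ZMod M) = g := by rw [ZMod.natCast_val, ZMod.cast_id]
  have hnw : ((n : ℕ) : ZMod M) * w = 0 := by
    rw [← hw]
    have hdvd : (M : ℕ) ∣ n * w.val := by
      refine ⟨eh, ?_⟩
      have e1 : d * eh = w.val := Nat.mul_div_cancel' hdw
      have e2 : n * d = M := Nat.div_mul_cancel hdM
      calc n * w.val = n * (d * eh) := by rw [e1]
      _ = (n * d) * eh := by ring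
      _ = M * eh := by rw [e2]
    have := (ZMod.natCast_eq_zero_iff (n * w.val) M).mpr hdvd
    push_cast at this
    exact this
  have htw : ((t : ℤ) : ZMod M) * w = g := by
    have hdvd : (M : ℤ) ∣ t * w.val - g.val := by
      refine ⟨-(eg * y), ?_⟩
      have e1 : t * (w.val : ℤ) = eg * (x * w.val) := by rw [htdef]; ring
      have e2 : (x : ℤ) * w.val = d - M * y := by linarith [hbez]
      calc t * (w.val : ℤ) - g.val = eg * (d - M * y) - g.val := by rw [e1, e2]
      _ = (eg * d - (g.val : ℤ)) - M * (eg * y) := by ring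
      _ = 0 - M * (eg * y) := by rw [hegd]; ring
      _ = M * (-(eg * y)) := by ring
    have h8 := (ZMod.intCast_zmod_eq_zero_iff_dvd (t * w.val - g.val) M).mpr hdvd
    push_cast at h8
    rw [hw, hg] at h8
    linear_combination h8
  have hkw : ((k : ℕ) : ZMod M) * w = g := by
    have h9 : (((k : ℕ) : ℤ) : ZMod M) = ((k : ℕ) : ZMod M) := by push_cast; rfl
    rw [← h9, hmodn]
    have expand : (((t + (n : ℤ) * (s2 - s1)) : ℤ) : ZMod M) * w
        = ((t : ℤ) : ZMod M) * w + (((s2 - s1 : ℤ)) : ZMod M) * (((n : ℕ) : ZMod M) * w) := by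
      push_cast; ring
    rw [expand, htw, hnw]
    ring
  exact ⟨k, hkcop, hkw⟩

theorem divisor_exclusion_forward (M : ℕ) (hM : 0 < M)
    (A B : Finset (ZMod M)) (hT : IsTiling A B) :
    ¬ ∃ a a' b b' : ZMod M, a ∈ A ∧ a' ∈ A ∧ b ∈ B ∧ b' ∈ B ∧
      (a, b) ≠ (a', b') ∧
      Nat.gcd (a - a').val M = Nat.gcd (b - b').val M := by
  haveI : NeZero M := ⟨hM.ne'⟩
  rintro ⟨a, a', b, b', hA, hA', hB, hB', hne, hgcd⟩
  by_cases hbb : b = b'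
  · subst hbb
    have h0 : (b - b).val = 0 := by simp
    rw [h0, Nat.gcd_zero_left] at hgcd
    have hdvd : M ∣ (a - a').val := by
      have h5 := Nat.gcd_dvd_left (a - a').val M
      rwa [hgcd] at h5
    have h1 : (a - a').val = 0 := Nat.eq_zero_of_dvd_of_lt hdvd (ZMod.val_lt _)
    have h2 : a = a' := sub_eq_zero.mp ((ZMod.val_eq_zero _).mp h1)
    exact hne (by rw [h2])
  · obtain ⟨k, hkcop, hkw⟩ := exists_coprime_mul_eq hM (a - a') (b - b') hgcd
    have hT1 : ∀ z, cnt A B 1 z = 1 := cnt_one hT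
    have hTk : ∀ z, cnt A B ((k : ℕ) : ZMod M) z = 1 := by
      have h := cnt_mul_coprime k hkcop 1 hT1
      simpa using h
    have m1 : (a + ((k : ℕ) : ZMod M) * b') - ((k : ℕ) : ZMod M) * b' ∈ A := by
      have h3 : (a + ((k : ℕ) : ZMod M) * b') - ((k : ℕ) : ZMod M) * b' = a := by ring
      rw [h3]; exact hA
    have m2 : (a + ((k : ℕ) : ZMod M) * b') - ((k : ℕ) : ZMod M) * b ∈ A := by
      have h3 : (a + ((k : ℕ) : ZMod M) * b') - ((k : ℕ) : ZMod M) * b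
          = a - ((k : ℕ) : ZMod M) * (b - b') := by ring
      rw [h3, hkw]
      have h4 : a - (a - a') = a' := by ring
      rw [h4]; exact hA'
    have hfin := cnt_single hTk (a + ((k : ℕ) : ZMod M) * b') b' hB' b hB m1 m2
    exact hbb hfin.symm
end

section
/- (Sands' divisor exclusion) Let A, B be finite subsets of ℤ/Mℤ. Then A ⊕ B = ℤ/Mℤ if and only if |A|·|B| = M and Div(A) ∩ Div(B) = {M}, where Div(S) = { gcd(s - s', M) : s, s' ∈ S }. -/
/-- The set of divisors `gcd(s - s', M)` of differences of elements of `S`. -/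
def DivSet (M : ℕ) (S : Finset (ZMod M)) : Finset ℕ :=
  (S ×ˢ S).image (fun q => Nat.gcd (q.1 - q.2).val M)

open scoped Classical

variable {M : ℕ} [NeZero M]

def TilingC (A B : Finset (ZMod M)) (c : ZMod M) : Prop :=
  ∀ z : ZMod M, ∃! ab : ZMod M × ZMod M, ab.1 ∈ A ∧ ab.2 ∈ B ∧ c * ab.1 + ab.2 = z

lemma TilingC.card_mul {A B : Finset (ZMod M)} {c : ZMod M} (h : TilingC A B c) :
    A.card * B.card = M := by
  have : (A ×ˢ B).card = (Finset.univ : Finset (ZMod M)).card := by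
    apply Finset.card_bij (fun ab _ => c * ab.1 + ab.2)
    · intro a _; exact Finset.mem_univ _
    · intro a ha b hb hab
      simp only [Finset.mem_product] at ha hb
      exact ((h (c * a.1 + a.2)).unique ⟨ha.1, ha.2, rfl⟩ ⟨hb.1, hb.2, hab.symm⟩)
    · intro z _
      obtain ⟨ab, ⟨h1, h2, h3⟩, -⟩ := h z
      exact ⟨ab, Finset.mem_product.2 ⟨h1, h2⟩, h3⟩
  rwa [Finset.card_product, Finset.card_univ, ZMod.card] at this

section step

variable {p : ℕ} [NeZero p] {A B : Finset (ZMod M)} {c : ZMod M}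

def Tz (A B : Finset (ZMod M)) (c : ZMod M) (p : ℕ) [NeZero p] (z : ZMod M) :
    Finset (ZMod p → ZMod M) :=
  Finset.univ.filter (fun v => (∀ i, v i ∈ A) ∧ z - c * ∑ i, v i ∈ B)

lemma mem_Tz {z : ZMod M} {v : ZMod p → ZMod M} :
    v ∈ Tz A B c p z ↔ (∀ i, v i ∈ A) ∧ z - c * ∑ i, v i ∈ B := by
  simp [Tz]

lemma card_Tz (h : TilingC A B c) (z : ZMod M) :
    (Tz A B c p z).card = A.card ^ (p - 1) := by
  have hsum : ∀ v : ZMod p → ZMod M,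
      (∑ i, v i) = v 0 + ∑ i ∈ Finset.univ.erase (0 : ZMod p), v i :=
    fun v => (Finset.add_sum_erase _ v (Finset.mem_univ 0)).symm
  rw [show A.card ^ (p - 1) =
      (Fintype.piFinset (fun _ : {i : ZMod p // i ≠ 0} => A)).card by
    rw [Fintype.card_piFinset]
    rw [Finset.prod_const, Finset.card_univ]
    congr 1
    rw [Fintype.card_subtype_compl, Fintype.card_subtype_eq, ZMod.card]]
  apply Finset.card_bij (fun v _ => fun i : {i : ZMod p // i ≠ 0} => v i.1)
  · intro v hv
    rw [Fintype.mem_piFinset]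
    exact fun i => (mem_Tz.1 hv).1 i.1
  · -- injective
    intro v hv v' hv' heq
    have hne : ∀ i : ZMod p, i ≠ 0 → v i = v' i := fun i hi => congrFun heq ⟨i, hi⟩
    have hS : ∑ i ∈ Finset.univ.erase (0 : ZMod p), v i
        = ∑ i ∈ Finset.univ.erase (0 : ZMod p), v' i :=
      Finset.sum_congr rfl (fun i hi => hne i (Finset.mem_erase.1 hi).1)
    obtain ⟨hv1, hv2⟩ := mem_Tz.1 hv
    obtain ⟨hv'1, hv'2⟩ := mem_Tz.1 hv'
    set S := ∑ i ∈ Finset.univ.erase (0 : ZMod p), v i with hSdef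
    have e1 : c * v 0 + (z - c * ∑ i, v i) = z - c * S := by
      rw [hsum v]; ring
    have e2 : c * v' 0 + (z - c * ∑ i, v' i) = z - c * S := by
      rw [hsum v', ← hS]; ring
    have h0 : v 0 = v' 0 := by
      have heq2 := ExistsUnique.unique (h (z - c * S))
        (y₁ := (v 0, z - c * ∑ i, v i)) (y₂ := (v' 0, z - c * ∑ i, v' i))
        ⟨hv1 0, hv2, e1⟩ ⟨hv'1 0, hv'2, e2⟩
      exact congrArg Prod.fst heq2
    funext i
    by_cases hi : i = 0
    · rw [hi, h0]
    · exact hne i hi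
  · -- surjective
    intro w hw
    rw [Fintype.mem_piFinset] at hw
    obtain ⟨⟨a, b⟩, ⟨ha, hb, hab⟩, -⟩ :=
      h (z - c * ∑ i : {i : ZMod p // i ≠ 0}, w i)
    refine ⟨fun i => if hi : i = 0 then a else w ⟨i, hi⟩, ?_, ?_⟩
    · rw [mem_Tz]
      refine ⟨fun i => ?_, ?_⟩
      · by_cases hi : i = 0
        · simpa [hi] using ha
        · simpa [hi] using hw ⟨i, hi⟩
      · have h1 : (∑ i : ZMod p, if hi : i = 0 then a else w ⟨i, hi⟩)
            = a + ∑ i : {i : ZMod p // i ≠ 0}, w i := by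
          rw [hsum]
          simp only [dif_pos]
          congr 1
          rw [Finset.sum_subtype (p := fun i : ZMod p => i ≠ 0)
            (Finset.univ.erase (0 : ZMod p))
            (fun i => by simp [Finset.mem_erase])
            (fun i => if hi : i = 0 then a else w ⟨i, hi⟩)]
          exact Finset.sum_congr rfl (fun i _ => by rw [dif_neg i.2])
        rw [h1]
        have h2 : z - c * (a + ∑ i : {i : ZMod p // i ≠ 0}, w i) = b := by
          linear_combination -hab
        rw [h2]; exact hb
    · funext i
      exact dif_neg i.2

end step

section step2

variable {p : ℕ} [NeZero p] {A B : Finset (ZMod M)} {c : ZMod M}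

lemma filter_card_modeq (hp : p.Prime) (hpM : ¬ p ∣ M) (h : TilingC A B c) (z : ZMod M) :
    ((A ×ˢ B).filter (fun ab => (p : ZMod M) * c * ab.1 + ab.2 = z)).card ≡ 1 [MOD p] := by
  haveI : Fact p.Prime := ⟨hp⟩
  let T := Tz A B c p z
  letI act : MulAction (Multiplicative (ZMod p)) {v // v ∈ T} :=
    { smul := fun g v => ⟨fun i => v.1 (i + g.toAdd), by
        obtain ⟨hv1, hv2⟩ := mem_Tz.1 v.2
        rw [mem_Tz]
        refine ⟨fun i => hv1 _, ?_⟩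
        have hs : (∑ i : ZMod p, v.1 (i + g.toAdd)) = ∑ i, v.1 i :=
          Fintype.sum_equiv (Equiv.addRight g.toAdd) _ _ (fun i => rfl)
        rw [hs]; exact hv2⟩
      one_smul := fun v => Subtype.ext (funext fun i => by
        show v.1 (i + _) = v.1 i
        simp)
      mul_smul := fun g g' v => Subtype.ext (funext fun i => by
        show v.1 (i + (g.toAdd + g'.toAdd)) = v.1 (i + g.toAdd + g'.toAdd)
        rw [add_assoc]) }
  -- constancy of fixed points
  have hconst : ∀ x : MulAction.fixedPoints (Multiplicative (ZMod p)) {v // v ∈ T},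
      ∀ j : ZMod p, x.1.1 j = x.1.1 0 := by
    intro x j
    have h1 := x.2 (Multiplicative.ofAdd j)
    have h2 : x.1.1 (0 + Multiplicative.toAdd (Multiplicative.ofAdd j)) = x.1.1 0 :=
      congrFun (congrArg Subtype.val h1) 0
    simpa using h2
  have hsum_const : ∀ a : ZMod M, (∑ _i : ZMod p, a) = (p : ZMod M) * a := by
    intro a
    rw [Finset.sum_const, Finset.card_univ, ZMod.card, nsmul_eq_mul]
  -- equivalence between fixed points and representations
  have e : MulAction.fixedPoints (Multiplicative (ZMod p)) {v // v ∈ T} ≃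
      {ab : ZMod M × ZMod M //
        ab ∈ (A ×ˢ B).filter (fun ab => (p : ZMod M) * c * ab.1 + ab.2 = z)} :=
    { toFun := fun x => ⟨(x.1.1 0, z - c * ((p : ZMod M) * x.1.1 0)), by
        obtain ⟨hv1, hv2⟩ := mem_Tz.1 x.1.2
        rw [Finset.mem_filter, Finset.mem_product]
        have hs : (∑ i, x.1.1 i) = (p : ZMod M) * x.1.1 0 := by
          rw [Finset.sum_congr rfl (fun i _ => hconst x i), hsum_const]
        refine ⟨⟨hv1 0, ?_⟩, by ring⟩
        rw [← hs]; exact hv2⟩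
      invFun := fun y => ⟨⟨fun _ => y.1.1, by
        obtain ⟨hmem, heq⟩ := Finset.mem_filter.1 y.2
        obtain ⟨ha, hb⟩ := Finset.mem_product.1 hmem
        rw [mem_Tz]
        refine ⟨fun _ => ha, ?_⟩
        rw [hsum_const]
        have : z - c * ((p : ZMod M) * y.1.1) = y.1.2 := by linear_combination -heq
        rw [this]; exact hb⟩, by
        intro g
        exact Subtype.ext (funext fun i => rfl)⟩
      left_inv := fun x => Subtype.ext (Subtype.ext (funext fun i => (hconst x i).symm))
      right_inv := fun y => by
        obtain ⟨hmem, heq⟩ := Finset.mem_filter.1 y.2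
        apply Subtype.ext
        show (y.1.1, z - c * ((p : ZMod M) * y.1.1)) = y.1
        have h2 : z - c * ((p : ZMod M) * y.1.1) = y.1.2 := by linear_combination -heq
        rw [h2] }
  have hP : IsPGroup p (Multiplicative (ZMod p)) :=
    IsPGroup.of_card (n := 1) (by simp [Nat.card_eq_fintype_card, ZMod.card])
  have hmod := hP.card_modEq_card_fixedPoints (α := {v // v ∈ T})
  rw [Nat.card_eq_fintype_card, Fintype.card_coe] at hmod
  rw [Nat.card_congr e] at hmod
  rw [Nat.card_eq_fintype_card, Fintype.card_coe] at hmod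
  rw [card_Tz h z] at hmod
  -- Fermat
  have hpA : ¬ p ∣ A.card := fun hd => hpM (hd.trans ⟨B.card, h.card_mul.symm⟩)
  have fermat : A.card ^ (p - 1) ≡ 1 [MOD p] := by
    rw [← ZMod.natCast_eq_natCast_iff]
    push_cast
    apply ZMod.pow_card_sub_one_eq_one
    rw [Ne, ZMod.natCast_eq_zero_iff]
    exact hpA
  exact (hmod.symm.trans fermat)

end step2

lemma TilingC.step {p : ℕ} (hp : p.Prime) (hpM : ¬ p ∣ M) {A B : Finset (ZMod M)}
    {c : ZMod M} (h : TilingC A B c) : TilingC A B ((p : ZMod M) * c) := by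
  haveI : NeZero p := ⟨hp.ne_zero⟩
  have hmod := fun z => filter_card_modeq hp hpM h z
  have h1 : ∀ w : ZMod M,
      1 ≤ ((A ×ˢ B).filter (fun ab => (p:ZMod M)*c*ab.1+ab.2 = w)).card := by
    intro w
    rcases Nat.eq_zero_or_pos ((A ×ˢ B).filter
      (fun ab => (p:ZMod M)*c*ab.1+ab.2 = w)).card with h0 | h0
    · exfalso
      have hm := hmod w
      rw [h0] at hm
      have hd : p ∣ 1 := (Nat.modEq_iff_dvd' (Nat.zero_le 1)).1 hm
      exact hp.one_lt.ne' (Nat.dvd_one.1 hd)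
    · exact h0
  have hsum : (∑ w : ZMod M,
      ((A ×ˢ B).filter (fun ab => (p:ZMod M)*c*ab.1+ab.2 = w)).card) = M := by
    rw [← Finset.card_eq_sum_card_fiberwise
      (fun x _ => Finset.mem_univ ((p:ZMod M)*c*x.1+x.2))]
    rw [Finset.card_product]
    exact h.card_mul
  have hall : ∀ w : ZMod M,
      ((A ×ˢ B).filter (fun ab => (p:ZMod M)*c*ab.1+ab.2 = w)).card = 1 := by
    have hiff := (Finset.sum_eq_sum_iff_of_le (s := Finset.univ)
      (f := fun _ : ZMod M => 1)
      (g := fun w => ((A ×ˢ B).filter (fun ab => (p:ZMod M)*c*ab.1+ab.2 = w)).card)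
      (fun w _ => h1 w)).1 (by
        rw [hsum, Finset.sum_const, Finset.card_univ, ZMod.card, smul_eq_mul, mul_one])
    intro w; exact (hiff w (Finset.mem_univ w)).symm
  intro z
  obtain ⟨ab, hab⟩ := Finset.card_eq_one.1 (hall z)
  refine ⟨ab, ?_, ?_⟩
  · have hm : ab ∈ (A ×ˢ B).filter (fun ab => (p:ZMod M)*c*ab.1+ab.2 = z) := by
      rw [hab]; exact Finset.mem_singleton_self ab
    obtain ⟨hmem, he⟩ := Finset.mem_filter.1 hm
    obtain ⟨ha, hb⟩ := Finset.mem_product.1 hmem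
    exact ⟨ha, hb, he⟩
  · intro y hy
    have hm : y ∈ (A ×ˢ B).filter (fun ab => (p:ZMod M)*c*ab.1+ab.2 = z) :=
      Finset.mem_filter.2 ⟨Finset.mem_product.2 ⟨hy.1, hy.2.1⟩, hy.2.2⟩
    rw [hab] at hm
    exact Finset.mem_singleton.1 hm

lemma TilingC.coprime {A B : Finset (ZMod M)} (h : TilingC A B 1) :
    ∀ v : ℕ, Nat.Coprime v M → TilingC A B (v : ZMod M) := by
  intro v
  induction v using Nat.strong_induction_on with
  | _ v ih =>
    intro hv
    rcases eq_or_ne v 1 with rfl | hv1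
    · simpa using h
    rcases eq_or_ne v 0 with rfl | hv0
    · have hM1 : M = 1 := by simpa [Nat.Coprime] using hv
      subst hM1
      intro z
      obtain ⟨ab, hab, hun⟩ := h z
      exact ⟨ab, ⟨hab.1, hab.2.1, Subsingleton.elim _ _⟩,
        fun y hy => hun y ⟨hy.1, hy.2.1, Subsingleton.elim _ _⟩⟩
    obtain ⟨q, hq, hdvd⟩ := Nat.exists_prime_and_dvd hv1
    obtain ⟨w, rfl⟩ := hdvd
    have hw0 : w ≠ 0 := by rintro rfl; exact hv0 (mul_zero q)
    have hwlt : w < q * w := by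
      have h2 := Nat.mul_le_mul_right w hq.two_le
      omega
    have hwcop : Nat.Coprime w M := Nat.Coprime.coprime_dvd_left (dvd_mul_left w q) hv
    have hqM : ¬ q ∣ M := by
      intro hqm
      have : q ∣ 1 := hv ▸ Nat.dvd_gcd (Dvd.intro w rfl) hqm
      exact hq.one_lt.ne' (Nat.dvd_one.1 this)
    have hstep := TilingC.step hq hqM (ih w hwlt hwcop)
    rw [Nat.cast_mul]
    exact hstep

lemma exists_coprime_mul_eq_s13 (x y : ZMod M)
    (hgcd : Nat.gcd x.val M = Nat.gcd y.val M) :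
    ∃ v : ℕ, Nat.Coprime v M ∧ (v : ZMod M) * x = y := by
  have hM : 0 < M := Nat.pos_of_ne_zero (NeZero.ne M)
  set d := Nat.gcd x.val M with hd
  have hd0 : 0 < d := Nat.gcd_pos_of_pos_right _ hM
  have hdM : d ∣ M := Nat.gcd_dvd_right _ _
  have hdx : d ∣ x.val := Nat.gcd_dvd_left _ _
  have hdy : d ∣ y.val := hgcd ▸ Nat.gcd_dvd_left y.val M
  set m := M / d with hm
  have hmd : d * m = M := Nat.mul_div_cancel' hdM
  have hm0 : 0 < m := by
    rcases Nat.eq_zero_or_pos m with h0 | h0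
    · rw [h0, mul_zero] at hmd; omega
    · exact h0
  haveI : NeZero m := ⟨hm0.ne'⟩
  have hmdvd : m ∣ M := Dvd.intro_left d hmd
  -- coprimality of x/d, y/d with m
  have hx' : Nat.Coprime (x.val / d) m := by
    rw [hm, hd]
    exact Nat.coprime_div_gcd_div_gcd hd0
  have hy' : Nat.Coprime (y.val / d) m := by
    rw [hm]
    rw [show M / d = M / Nat.gcd y.val M by rw [hgcd]]
    rw [show y.val / d = y.val / Nat.gcd y.val M by rw [hgcd]]
    exact Nat.coprime_div_gcd_div_gcd (hgcd ▸ hd0)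
  set ux := ZMod.unitOfCoprime _ hx'
  set uy := ZMod.unitOfCoprime _ hy'
  obtain ⟨U, hU⟩ := ZMod.unitsMap_surjective hmdvd (uy * ux⁻¹)
  refine ⟨(U : ZMod M).val, ZMod.val_coe_unit_coprime U, ?_⟩
  set v := (U : ZMod M).val with hv
  set k := ((uy * ux⁻¹ : (ZMod m)ˣ) : ZMod m).val with hk
  -- v ≡ k [MOD m]
  have hvk : v ≡ k [MOD m] := by
    rw [← ZMod.natCast_eq_natCast_iff]
    have h1 : ((v : ℕ) : ZMod m) = ZMod.castHom hmdvd (ZMod m) ((v : ℕ) : ZMod M) := by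
      rw [map_natCast]
    rw [h1, hv]
    rw [show (((U : ZMod M).val : ℕ) : ZMod M) = (U : ZMod M) by
      rw [ZMod.natCast_val, ZMod.cast_id]]
    have h2 : ZMod.castHom hmdvd (ZMod m) (U : ZMod M) = ((uy * ux⁻¹ : (ZMod m)ˣ) : ZMod m) := by
      have := congrArg (fun u : (ZMod m)ˣ => (u : ZMod m)) hU
      simpa [ZMod.unitsMap_def] using this
    rw [h2, hk, ZMod.natCast_val, ZMod.cast_id]
  -- k * (x.val / d) ≡ y.val / d [MOD m]
  have hkx : k * (x.val / d) ≡ y.val / d [MOD m] := by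
    rw [← ZMod.natCast_eq_natCast_iff]
    push_cast
    rw [hk, ZMod.natCast_val, ZMod.cast_id]
    have h3 : ((x.val / d : ℕ) : ZMod m) = (ux : ZMod m) := by
      rw [ZMod.coe_unitOfCoprime]
    have h4 : ((y.val / d : ℕ) : ZMod m) = (uy : ZMod m) := by
      rw [ZMod.coe_unitOfCoprime]
    rw [h3, h4]
    rw [show ((uy * ux⁻¹ : (ZMod m)ˣ) : ZMod m) * (ux : ZMod m)
        = ((uy * ux⁻¹ * ux : (ZMod m)ˣ) : ZMod m) by push_cast; ring]
    rw [inv_mul_cancel_right]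
  -- combine: v * x.val ≡ y.val [MOD M]
  have hmain : v * x.val ≡ y.val [MOD M] := by
    have h5 : v * (x.val / d) ≡ y.val / d [MOD m] :=
      (Nat.ModEq.mul_right _ hvk).trans hkx
    have h6 := Nat.ModEq.mul_right' (c := d) h5
    rw [mul_assoc, Nat.div_mul_cancel hdx, Nat.div_mul_cancel hdy,
      mul_comm m d, hmd] at h6
    exact h6
  have hfin := (ZMod.natCast_eq_natCast_iff _ _ _).2 hmain
  push_cast at hfin
  rw [ZMod.natCast_val x, ZMod.cast_id] at hfin
  rwa [ZMod.natCast_val y, ZMod.cast_id] at hfin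


theorem sands_divisor_exclusion (M : ℕ) (hM : 0 < M)
    (A B : Finset (ZMod M)) :
    IsTiling A B ↔
      (A.card * B.card = M ∧ DivSet M A ∩ DivSet M B = {M}) := by
  haveI : NeZero M := ⟨hM.ne'⟩
  constructor
  · intro h
    have h1 : TilingC A B 1 := by
      intro z
      obtain ⟨ab, hab, hun⟩ := h z
      exact ⟨ab, ⟨hab.1, hab.2.1, by rw [one_mul]; exact hab.2.2⟩,
        fun y hy => hun y ⟨hy.1, hy.2.1, by rw [← hy.2.2, one_mul]⟩⟩
    have hcard := h1.card_mul
    refine ⟨hcard, ?_⟩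
    have hA0 : A.card ≠ 0 := by
      intro h0; rw [h0, zero_mul] at hcard; omega
    have hB0 : B.card ≠ 0 := by
      intro h0; rw [h0, mul_zero] at hcard; omega
    have hMmem : ∀ S : Finset (ZMod M), S.Nonempty → M ∈ DivSet M S := by
      intro S ⟨s, hs⟩
      rw [DivSet, Finset.mem_image]
      exact ⟨(s, s), Finset.mem_product.2 ⟨hs, hs⟩, by
        simp [sub_self, ZMod.val_zero]⟩
    apply Finset.Subset.antisymm
    · intro d hd
      rw [Finset.mem_inter] at hd
      obtain ⟨hdA, hdB⟩ := hd
      rw [DivSet, Finset.mem_image] at hdA hdB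
      obtain ⟨qa, hqa, hda⟩ := hdA
      obtain ⟨qb, hqb, hdb⟩ := hdB
      obtain ⟨ha1, ha2⟩ := Finset.mem_product.1 hqa
      obtain ⟨hb1, hb2⟩ := Finset.mem_product.1 hqb
      rw [Finset.mem_singleton]
      by_contra hne
      have hx0 : qa.1 - qa.2 ≠ 0 := by
        intro h0
        rw [h0, ZMod.val_zero, Nat.gcd_zero_left] at hda
        exact hne hda.symm
      obtain ⟨v, hvcop, hvxy⟩ := exists_coprime_mul_eq_s13 (qa.1 - qa.2) (qb.1 - qb.2)
        (by rw [hda, hdb])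
      have htil := h1.coprime v hvcop
      have hkey := ExistsUnique.unique (htil ((v : ZMod M) * qa.1 + qb.2))
        (y₁ := (qa.1, qb.2)) (y₂ := (qa.2, qb.1))
        ⟨ha1, hb2, rfl⟩ ⟨ha2, hb1, by linear_combination -hvxy⟩
      exact hx0 (sub_eq_zero.2 (congrArg Prod.fst hkey))
    · intro d hd
      rw [Finset.mem_singleton] at hd
      subst hd
      rw [Finset.mem_inter]
      exact ⟨hMmem A (Finset.card_pos.1 (Nat.pos_of_ne_zero hA0)),
        hMmem B (Finset.card_pos.1 (Nat.pos_of_ne_zero hB0))⟩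
  · rintro ⟨hcard, hdiv⟩
    have hinj : ∀ ab ∈ A ×ˢ B, ∀ ab' ∈ A ×ˢ B,
        ab.1 + ab.2 = ab'.1 + ab'.2 → ab = ab' := by
      rintro ⟨a, b⟩ hab ⟨a', b'⟩ hab' heq
      obtain ⟨ha, hb⟩ := Finset.mem_product.1 hab
      obtain ⟨ha', hb'⟩ := Finset.mem_product.1 hab'
      simp only at heq
      have hw : a - a' = b' - b := by linear_combination heq
      have hdmem : Nat.gcd (a - a').val M ∈ DivSet M A ∩ DivSet M B := by
        rw [Finset.mem_inter]
        constructor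
        · rw [DivSet, Finset.mem_image]
          exact ⟨(a, a'), Finset.mem_product.2 ⟨ha, ha'⟩, rfl⟩
        · rw [DivSet, Finset.mem_image]
          exact ⟨(b', b), Finset.mem_product.2 ⟨hb', hb⟩, by rw [← hw]⟩
      rw [hdiv, Finset.mem_singleton] at hdmem
      have hdvd : M ∣ (a - a').val := by
        have := Nat.gcd_dvd_left (a - a').val M
        rw [hdmem] at this
        exact this
      have haa : a = a' := by
        have hlt := ZMod.val_lt (a - a')
        have hv0 : (a - a').val = 0 := Nat.eq_zero_of_dvd_of_lt hdvd hlt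
        exact sub_eq_zero.1 (by rwa [ZMod.val_eq_zero] at hv0)
      subst haa
      rw [add_left_cancel heq]
    have hinj' : Set.InjOn (fun ab : ZMod M × ZMod M => ab.1 + ab.2) ↑(A ×ˢ B) :=
      fun ab hab ab' hab' heq =>
        hinj ab (Finset.mem_coe.1 hab) ab' (Finset.mem_coe.1 hab') heq
    have himg : (A ×ˢ B).image (fun ab => ab.1 + ab.2) = Finset.univ := by
      apply Finset.eq_univ_of_card
      rw [Finset.card_image_of_injOn hinj', Finset.card_product, hcard, ZMod.card]
    intro z
    have hz : z ∈ (A ×ˢ B).image (fun ab => ab.1 + ab.2) := by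
      rw [himg]; exact Finset.mem_univ z
    obtain ⟨ab, habm, habe⟩ := Finset.mem_image.1 hz
    obtain ⟨ha, hb⟩ := Finset.mem_product.1 habm
    refine ⟨ab, ⟨ha, hb, habe⟩, ?_⟩
    intro y hy
    exact hinj y (Finset.mem_product.2 ⟨hy.1, hy.2.1⟩) ab habm (by rw [hy.2.2, habe])
end

section
/- Let A ⊕ B = ℤ/Mℤ be a tiling of ℤ/Mℤ and let x, x' ∈ ℤ/Mℤ with gcd(x - x', M) = M / p for a prime p with p² ∣ M. Write x = a + b and x' = a' + b' with a, a' ∈ A, b, b' ∈ B. Then either p^{n} ∣ (a - a') or p^{n} ∣ (b - b'), where p^n is the exact power of p dividing M; moreover p^{n-1} divides both a - a' and b - b'. -/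
/-!
Put `u = a - a'` and `v = b - b'`, so that `M / p ∣ u + v`. A divisor of `M` not divisible by
`p ^ n` divides `M / p`; hence if neither `u` nor `v` is divisible by `p ^ n`, every such divisor
of `u` divides `v` and conversely, so `gcd(u, M) = gcd(v, M)` and `u = r * v` for a unit `r`.
Then `a + r * b' = a' + r * b`, and Tijdeman's theorem that `A ⊕ r • B` is again a tiling for
every `r` prime to `M` gives `a = a'`, i.e. `u = 0`. The divisibility by `p ^ (n - 1)` follows since
`p ^ (n - 1) ∣ M / p`.

Tijdeman's theorem is proved one prime `q ∤ M` at a time in the group ring `𝔽_q[ℤ/M]`: writing `S`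
for the indicator of `s • B` and `J` for the sum of all group elements, `A ⊕ s • B` tiling means
`1_A * S = J`; by Frobenius the indicator of `(q * s) • B` is `S ^ q`, and
`1_A * S ^ q = J * S ^ (q - 1) = |B| ^ (q - 1) • J = J`. So each element has `≡ 1 (mod q)`
representations `a + q s b`, and since these counts sum to `|A| |B| = M`, each is exactly `1`.
-/

open AddMonoidAlgebra Finset

variable {M : ℕ}

def dilatedReps (A B : Finset (ZMod M)) (r z : ZMod M) : Finset (ZMod M × ZMod M) :=
  {ab ∈ A ×ˢ B | ab.1 + r * ab.2 = z}

theorem sum_card_dilatedReps [NeZero M] (A B : Finset (ZMod M)) (r : ZMod M) :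
    ∑ z, #(dilatedReps A B r z) = #A * #B := by
  rw [← card_product]
  exact (card_eq_sum_card_fiberwise fun _ _ => mem_univ _).symm

theorem eq_one_of_ne_zero_of_sum_eq_card {ι : Type*} [Fintype ι] {f : ι → ℕ} (hf : ∀ i, f i ≠ 0)
    (hsum : ∑ i, f i = Fintype.card ι) (i : ι) : f i = 1 := by
  rw [Fintype.card_eq_sum_ones] at hsum
  exact ((sum_eq_sum_iff_of_le fun j _ => Nat.one_le_iff_ne_zero.2 (hf j)).1 hsum.symm i
    (mem_univ i)).symm

section GroupRing

variable (R : Type*) [CommSemiring R]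

noncomputable def dilatedIndicator (S : Finset (ZMod M)) (r : ZMod M) : R[ZMod M] :=
  ∑ b ∈ S, single (r * b) 1

noncomputable def allOnes [NeZero M] : R[ZMod M] :=
  ∑ z, single z 1

theorem coeff_dilatedIndicator_mul (A B : Finset (ZMod M)) (r z : ZMod M) :
    (dilatedIndicator R A 1 * dilatedIndicator R B r).coeff z = #(dilatedReps A B r z) := by
  classical
  simp only [dilatedIndicator, sum_mul_sum, single_mul_single, one_mul, mul_one, coeff_sum,
    coeff_single, Finsupp.finsetSum_apply, Finsupp.single_apply, ← sum_product', sum_boole,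
    dilatedReps]

theorem coeff_allOnes [NeZero M] (z : ZMod M) : (allOnes R).coeff z = 1 := by
  classical
  simp [allOnes, Finsupp.finsetSum_apply, Finsupp.single_apply]

theorem allOnes_mul_single [NeZero M] (x : ZMod M) : allOnes R * single x 1 = allOnes R := by
  simp only [allOnes, sum_mul, single_mul_single, mul_one]
  exact Fintype.sum_equiv (Equiv.addRight x) _ _ (fun _ => rfl)

theorem allOnes_mul_dilatedIndicator_pow [NeZero M] (S : Finset (ZMod M)) (r : ZMod M) (k : ℕ) :
    allOnes R * dilatedIndicator R S r ^ k = (#S ^ k) • allOnes R := by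
  induction k with
  | zero => simp
  | succ k ih =>
    rw [pow_succ, ← mul_assoc, ih, smul_mul_assoc, dilatedIndicator, mul_sum]
    simp only [allOnes_mul_single, sum_const, smul_smul, pow_succ]

theorem dilatedIndicator_pow_char (q : ℕ) [Fact q.Prime] (S : Finset (ZMod M)) (r : ZMod M) :
    dilatedIndicator (ZMod q) S r ^ q = dilatedIndicator (ZMod q) S (q * r) := by
  have : CharP (ZMod q)[ZMod M] q := charP_of_injective_algebraMap' (ZMod q) q
  simp only [dilatedIndicator, sum_pow_char, single_pow, one_pow, nsmul_eq_mul, mul_assoc]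

end GroupRing

variable {A B : Finset (ZMod M)}

theorem card_dilatedReps_prime_mul_modEq_one [NeZero M] {q : ℕ} (hq : q.Prime) (hqB : ¬ q ∣ #B)
    {s : ZMod M} (hs : ∀ z, #(dilatedReps A B s z) = 1) (z : ZMod M) :
    #(dilatedReps A B (q * s) z) ≡ 1 [MOD q] := by
  have : Fact q.Prime := ⟨hq⟩
  have hAs : dilatedIndicator (ZMod q) A 1 * dilatedIndicator (ZMod q) B s = allOnes (ZMod q) := by
    ext z
    rw [coeff_dilatedIndicator_mul, hs, coeff_allOnes, Nat.cast_one]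
  have hFermat : ((#B ^ (q - 1) : ℕ) : ZMod q) = 1 := by
    rw [Nat.cast_pow]
    exact ZMod.pow_card_sub_one_eq_one (by rwa [Ne, ZMod.natCast_eq_zero_iff])
  have hAqs : dilatedIndicator (ZMod q) A 1 * dilatedIndicator (ZMod q) B (q * s) =
      allOnes (ZMod q) := by
    calc _ = dilatedIndicator (ZMod q) A 1 * dilatedIndicator (ZMod q) B s ^ (q - 1 + 1) := by
          rw [Nat.sub_add_cancel hq.one_lt.le, dilatedIndicator_pow_char]
      _ = (#B ^ (q - 1)) • allOnes (ZMod q) := by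
          rw [pow_succ', ← mul_assoc, hAs, allOnes_mul_dilatedIndicator_pow]
      _ = allOnes (ZMod q) := by
          rw [← Nat.cast_smul_eq_nsmul (ZMod q), hFermat, one_smul]
  have hz := congrArg (·.coeff z) hAqs
  rw [coeff_dilatedIndicator_mul, coeff_allOnes, ← Nat.cast_one] at hz
  exact (ZMod.natCast_eq_natCast_iff _ _ _).1 hz

namespace IsTiling

theorem card_dilatedReps_one (hT : IsTiling A B) (z : ZMod M) : #(dilatedReps A B 1 z) = 1 := by
  obtain ⟨ab, hab, huniq⟩ := hT z
  refine card_eq_one.2 ⟨ab, eq_singleton_iff_unique_mem.2 ⟨?_, fun cd hcd => ?_⟩⟩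
  · simpa [dilatedReps, and_assoc] using hab
  · simp only [dilatedReps, mem_filter, mem_product, one_mul] at hcd
    exact huniq cd ⟨hcd.1.1, hcd.1.2, hcd.2⟩

theorem card_mul_card [NeZero M] (hT : IsTiling A B) : #A * #B = M := by
  rw [← sum_card_dilatedReps A B 1]
  simp [hT.card_dilatedReps_one]

theorem card_dilatedReps_eq_one [NeZero M] (hT : IsTiling A B) {r : ℕ} (hr : r.Coprime M)
    (z : ZMod M) : #(dilatedReps A B r z) = 1 := by
  induction r using induction_on_primes generalizing z with
  | zero =>
    obtain rfl : M = 1 := Nat.coprime_zero_left _ |>.1 hr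
    rw [dilatedReps, filter_true_of_mem fun _ _ => Subsingleton.elim _ _, card_product,
      hT.card_mul_card]
  | one => simpa using hT.card_dilatedReps_one z
  | prime_mul q s hq ih =>
    have hqM : ¬ q ∣ M := (Nat.Prime.coprime_iff_not_dvd hq).1 (Nat.Coprime.coprime_mul_right hr)
    have hqB : ¬ q ∣ #B := fun h => hqM (h.trans (Dvd.intro_left _ hT.card_mul_card))
    have hmod := card_dilatedReps_prime_mul_modEq_one hq hqB (ih (Nat.Coprime.coprime_mul_left hr))
    rw [Nat.cast_mul]
    refine eq_one_of_ne_zero_of_sum_eq_card (f := fun w => #(dilatedReps A B (q * s) w))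
      (fun w h => ?_) ?_ z
    · simpa [h, Nat.ModEq, Nat.mod_eq_of_lt hq.one_lt] using hmod w
    · rw [sum_card_dilatedReps, hT.card_mul_card, ZMod.card]

theorem eq_of_associated_sub [NeZero M] (hT : IsTiling A B) {a a' b b' : ZMod M}
    (ha : a ∈ A) (ha' : a' ∈ A) (hb : b ∈ B) (hb' : b' ∈ B) (h : Associated (b - b') (a - a')) :
    a = a' := by
  obtain ⟨r, hr⟩ := h
  have hcard := hT.card_dilatedReps_eq_one (ZMod.val_coe_unit_coprime r) (a + r * b')
  rw [ZMod.natCast_zmod_val] at hcard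
  have hmem : (a, b') ∈ dilatedReps A B r (a + r * b') := by simp [dilatedReps, ha, hb']
  have hmem' : (a', b) ∈ dilatedReps A B r (a + r * b') := by
    simp only [dilatedReps, mem_filter, mem_product, ha', hb, true_and]
    linear_combination hr
  exact congrArg Prod.fst (card_le_one.1 hcard.le _ hmem _ hmem')

end IsTiling

theorem Nat.dvd_div_prime_of_not_pow_dvd {p n d M : ℕ} (hp : p.Prime) (hpn : p ^ n ∣ M)
    (hd : d ∣ M) (hdn : ¬ p ^ n ∣ d) : d ∣ M / p := by
  obtain ⟨m, rfl⟩ := hd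
  obtain ⟨k, rfl⟩ : p ∣ m := by
    by_contra h
    exact hdn (((hp.coprime_iff_not_dvd.2 h).pow_left n).dvd_of_dvd_mul_right hpn)
  rw [mul_left_comm, Nat.mul_div_cancel_left _ hp.pos]
  exact dvd_mul_right _ _

theorem Nat.pow_pred_dvd_div {p n M : ℕ} (hpn : p ^ n ∣ M) : p ^ (n - 1) ∣ M / p := by
  rcases n with _ | n
  · exact one_dvd _
  · exact Nat.dvd_div_of_mul_dvd (by rwa [← Nat.pow_succ'])

namespace ZMod

theorem natCast_dvd_iff_dvd_val [NeZero M] {k : ℕ} (hk : k ∣ M) (c : ZMod M) :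
    (k : ZMod M) ∣ c ↔ k ∣ c.val := by
  constructor
  · rintro ⟨t, rfl⟩
    rw [← natCast_zmod_val t, ← Nat.cast_mul, val_natCast]
    exact (Nat.dvd_mod_iff hk).2 (dvd_mul_right k _)
  · rintro ⟨t, ht⟩
    exact ⟨t, by rw [← natCast_zmod_val c, ht, Nat.cast_mul]⟩

theorem natCast_gcd_val_dvd [NeZero M] (c : ZMod M) : ((c.val.gcd M : ℕ) : ZMod M) ∣ c :=
  (natCast_dvd_iff_dvd_val (Nat.gcd_dvd_right _ _) c).2 (Nat.gcd_dvd_left _ _)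

theorem associated_of_gcd_val_eq [NeZero M] {u v : ZMod M} (h : u.val.gcd M = v.val.gcd M) :
    Associated v u := by
  obtain ⟨g, hu, hv⟩ : ∃ g, u.val.gcd M = g ∧ v.val.gcd M = g := ⟨_, rfl, h.symm⟩
  have hg : 0 < g := hu ▸ Nat.gcd_pos_of_pos_right _ (NeZero.pos M)
  have hgM : g ∣ M := hu ▸ Nat.gcd_dvd_right _ _
  obtain ⟨σ, hσ⟩ : g ∣ u.val := hu ▸ Nat.gcd_dvd_left _ _
  obtain ⟨τ, hτ⟩ : g ∣ v.val := hv ▸ Nat.gcd_dvd_left _ _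
  have hσM : σ.Coprime (M / g) := by
    have := Nat.coprime_div_gcd_div_gcd (m := u.val) (n := M) (hu ▸ hg)
    rwa [hu, hσ, Nat.mul_div_cancel_left _ hg] at this
  have hτM : τ.Coprime (M / g) := by
    have := Nat.coprime_div_gcd_div_gcd (m := v.val) (n := M) (hv ▸ hg)
    rwa [hv, hτ, Nat.mul_div_cancel_left _ hg] at this
  obtain ⟨r, hr⟩ := unitsMap_surjective (Nat.div_dvd_of_dvd hgM)
    (unitOfCoprime σ hσM * (unitOfCoprime τ hτM)⁻¹)
  refine ⟨r, ?_⟩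
  have hrτ : τ * (r : ZMod M).val ≡ σ [MOD M / g] := by
    have hcast : ((r : ZMod M).val : ZMod (M / g)) = unitsMap (Nat.div_dvd_of_dvd hgM) r := by
      rw [natCast_val, unitsMap_def, Units.coe_map, MonoidHom.coe_coe, castHom_apply]
    rw [← natCast_eq_natCast_iff, Nat.cast_mul, hcast, hr, Units.val_mul, coe_unitOfCoprime,
      ← coe_unitOfCoprime τ hτM, mul_left_comm, Units.mul_inv, mul_one]
  have := hrτ.mul_left' g
  rw [Nat.mul_div_cancel' hgM, ← mul_assoc, ← hτ, ← hσ, ← natCast_eq_natCast_iff] at this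
  simpa using this


theorem gcd_val_dvd_gcd_val_of_dvd_add [NeZero M] {p n : ℕ} (hp : p.Prime) (hpn : p ^ n ∣ M)
    {u v : ZMod M} (huv : ((M / p : ℕ) : ZMod M) ∣ u + v) (hu : ¬ ((p ^ n : ℕ) : ZMod M) ∣ u) :
    u.val.gcd M ∣ v.val.gcd M := by
  have hgM := Nat.gcd_dvd_right u.val M
  have hgp : ¬ p ^ n ∣ u.val.gcd M := fun h =>
    hu ((natCast_dvd_iff_dvd_val hpn u).2 (h.trans (Nat.gcd_dvd_left _ _)))
  have hgv : ((u.val.gcd M : ℕ) : ZMod M) ∣ v := (dvd_add_right (natCast_gcd_val_dvd u)).1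
    ((Nat.cast_dvd_cast (Nat.dvd_div_prime_of_not_pow_dvd hp hpn hgM hgp)).trans huv)
  exact Nat.dvd_gcd ((natCast_dvd_iff_dvd_val hgM v).1 hgv) hgM

end ZMod

theorem two_point_splitting_general (M : ℕ) (hM : 0 < M)
    (A B : Finset (ZMod M)) (hT : IsTiling A B)
    (p : ℕ) (hp : p.Prime)
    (n : ℕ) (hpn : p ^ n ∣ M)
    (x x' : ZMod M) (hxx' : Nat.gcd (x - x').val M = M / p)
    (a a' b b' : ZMod M)
    (ha : a ∈ A) (ha' : a' ∈ A) (hb : b ∈ B) (hb' : b' ∈ B)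
    (hx : a + b = x) (hx' : a' + b' = x') :
    (((p ^ n : ℕ) : ZMod M) ∣ (a - a') ∨ ((p ^ n : ℕ) : ZMod M) ∣ (b - b')) ∧
    ((p ^ (n - 1) : ℕ) : ZMod M) ∣ (a - a') ∧
    ((p ^ (n - 1) : ℕ) : ZMod M) ∣ (b - b') := by
  have : NeZero M := ⟨hM.ne'⟩
  have hsum : (a - a') + (b - b') = x - x' := by rw [← hx, ← hx']; ring
  have hMp : ((M / p : ℕ) : ZMod M) ∣ (a - a') + (b - b') :=
    hsum ▸ hxx' ▸ ZMod.natCast_gcd_val_dvd (x - x')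
  have hsplit : ((p ^ n : ℕ) : ZMod M) ∣ a - a' ∨ ((p ^ n : ℕ) : ZMod M) ∣ b - b' := by
    by_contra! h
    have hgcd : (a - a').val.gcd M = (b - b').val.gcd M := Nat.dvd_antisymm
      (ZMod.gcd_val_dvd_gcd_val_of_dvd_add hp hpn hMp h.1)
      (ZMod.gcd_val_dvd_gcd_val_of_dvd_add hp hpn (add_comm (a - a') _ ▸ hMp) h.2)
    have haa' := hT.eq_of_associated_sub ha ha' hb hb' (ZMod.associated_of_gcd_val_eq hgcd)
    exact h.1 (by rw [haa', sub_self]; exact dvd_zero _)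
  have hpred : ((p ^ (n - 1) : ℕ) : ZMod M) ∣ (a - a') + (b - b') :=
    (Nat.cast_dvd_cast (Nat.pow_pred_dvd_div hpn)).trans hMp
  have hpred_dvd : ((p ^ (n - 1) : ℕ) : ZMod M) ∣ ((p ^ n : ℕ) : ZMod M) :=
    Nat.cast_dvd_cast (pow_dvd_pow p (n.sub_le 1))
  refine ⟨hsplit, ?_⟩
  rcases hsplit with hu | hv
  · exact ⟨hpred_dvd.trans hu, (dvd_add_right (hpred_dvd.trans hu)).1 hpred⟩
  · exact ⟨(dvd_add_left (hpred_dvd.trans hv)).1 hpred, hpred_dvd.trans hv⟩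

theorem two_point_splitting (M : ℕ) (hM : 0 < M)
    (A B : Finset (ZMod M)) (hT : IsTiling A B)
    (p : ℕ) (hp : p.Prime) (hp2 : p ^ 2 ∣ M)
    (n : ℕ) (hpn : p ^ n ∣ M) (hpn1 : ¬ p ^ (n + 1) ∣ M)
    (x x' : ZMod M) (hxx' : Nat.gcd (x - x').val M = M / p)
    (a a' b b' : ZMod M)
    (ha : a ∈ A) (ha' : a' ∈ A) (hb : b ∈ B) (hb' : b' ∈ B)
    (hx : a + b = x) (hx' : a' + b' = x') :
    (((p ^ n : ℕ) : ZMod M) ∣ (a - a') ∨ ((p ^ n : ℕ) : ZMod M) ∣ (b - b')) ∧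
    ((p ^ (n - 1) : ℕ) : ZMod M) ∣ (a - a') ∧
    ((p ^ (n - 1) : ℕ) : ZMod M) ∣ (b - b') :=
  two_point_splitting_general M hM A B hT p hp n hpn x x' hxx' a a' b b' ha ha' hb hb' hx hx'
end
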